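/- arXiv:math/0205076 — 3 statements merged into one kernel-verified Lean document; each statement's English description precedes it below -/
import Mathlib

section
/- (Classical Karamata theorem, as used in the paper.) Let β : ℝ → ℝ be nondecreasing and right continuous with β(t) = 0 for all t ≤ 0, and let μ_β denote its Lebesgue–Stieltjes measure. Assume h(r) := ∫_{[0,∞)} e^{−t/r} dμ_β(t) is finite for every r > 0 and that lim_{r→∞} h(r)/r = C. Then lim_{t→∞} β(t)/t = C. -/
open MeasureTheory Filter Set

noncomputable section

private lemma karamata_key (μ : Measure ℝ)
    (hInt : ∀ r : ℝ, 0 < r → IntegrableOn (fun t => Real.exp (-t / r)) (Ici (0:ℝ)) μ)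
    (C : ℝ)
    (hlim : Tendsto (fun r => (∫ t in Ici (0:ℝ), Real.exp (-t / r) ∂μ) / r) atTop (nhds C))
    (q : Polynomial ℝ) :
    (∀ r : ℝ, 0 < r →
        IntegrableOn (fun t => Real.exp (-t / r) * q.eval (Real.exp (-t / r))) (Ici (0:ℝ)) μ) ∧
      Tendsto (fun r => (∫ t in Ici (0:ℝ),
          Real.exp (-t / r) * q.eval (Real.exp (-t / r)) ∂μ) / r) atTop
        (nhds (C * ∫ x in (0:ℝ)..1, q.eval x)) := by
  induction q using Polynomial.induction_on' with
  | add p q hp hq =>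
    have hint : ∀ r : ℝ, 0 < r →
        IntegrableOn (fun t => Real.exp (-t / r) * (p + q).eval (Real.exp (-t / r)))
          (Ici (0:ℝ)) μ := by
      intro r hr
      have := (hp.1 r hr).add (hq.1 r hr)
      simpa [Polynomial.eval_add, mul_add, Pi.add_def] using this
    refine ⟨hint, ?_⟩
    have hsum := (hp.2).add (hq.2)
    have hval : C * ∫ x in (0:ℝ)..1, (p + q).eval x
        = (C * ∫ x in (0:ℝ)..1, p.eval x) + C * ∫ x in (0:ℝ)..1, q.eval x := by
      rw [show (fun x => (p+q).eval x) = fun x => p.eval x + q.eval x by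
            funext x; simp [Polynomial.eval_add]]
      rw [intervalIntegral.integral_add ((Polynomial.continuous p).intervalIntegrable _ _)
            ((Polynomial.continuous q).intervalIntegrable _ _)]
      ring
    rw [hval]
    apply hsum.congr'
    filter_upwards [eventually_gt_atTop (0:ℝ)] with r hr
    rw [show (fun t => Real.exp (-t / r) * (p+q).eval (Real.exp (-t / r)))
          = fun t => Real.exp (-t / r) * p.eval (Real.exp (-t / r))
              + Real.exp (-t / r) * q.eval (Real.exp (-t / r)) by
          funext t; simp [Polynomial.eval_add]; ring]
    rw [integral_add (hp.1 r hr) (hq.1 r hr), add_div]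
  | monomial n a =>
    have hfun : ∀ r : ℝ, 0 < r → ∀ t : ℝ,
        Real.exp (-t / r) * (Polynomial.monomial n a).eval (Real.exp (-t / r))
          = a * Real.exp (-t / (r / ((n:ℝ) + 1))) := by
      intro r hr t
      have hs : -t / (r / ((n:ℝ) + 1)) = (-t / r) + (n:ℝ) * (-t / r) := by
        field_simp
        ring
      rw [Polynomial.eval_monomial, hs, Real.exp_add, Real.exp_nat_mul]
      ring
    have hint : ∀ r : ℝ, 0 < r →
        IntegrableOn (fun t => Real.exp (-t / r) *
          (Polynomial.monomial n a).eval (Real.exp (-t / r))) (Ici (0:ℝ)) μ := by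
      intro r hr
      have hs : (0:ℝ) < r / ((n:ℝ) + 1) := by positivity
      have h2 : IntegrableOn (fun t => a * Real.exp (-t / (r / ((n:ℝ) + 1)))) (Ici (0:ℝ)) μ :=
        (hInt _ hs).const_mul a
      exact h2.congr_fun (fun t _ => (hfun r hr t).symm) measurableSet_Ici
    refine ⟨hint, ?_⟩
    have hval : C * ∫ x in (0:ℝ)..1, (Polynomial.monomial n a).eval x
        = (a / ((n:ℝ) + 1)) * C := by
      have : ∀ x : ℝ, (Polynomial.monomial n a).eval x = a * x ^ n := fun x => by
        simp [Polynomial.eval_monomial]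
      rw [show (fun x => (Polynomial.monomial n a).eval x) = fun x => a * x ^ n by
            funext x; exact this x]
      rw [intervalIntegral.integral_const_mul, integral_pow]
      push_cast
      ring
    rw [hval]
    have h1 : Tendsto (fun r : ℝ => r / ((n:ℝ) + 1)) atTop atTop :=
      tendsto_id.atTop_div_const (by positivity)
    have h2 := (hlim.comp h1).const_mul (a / ((n:ℝ) + 1))
    apply h2.congr'
    filter_upwards [eventually_gt_atTop (0:ℝ)] with r hr
    have hs : (0:ℝ) < r / ((n:ℝ) + 1) := by positivity
    have : ∫ t in Ici (0:ℝ),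
        Real.exp (-t / r) * (Polynomial.monomial n a).eval (Real.exp (-t / r)) ∂μ
        = a * ∫ t in Ici (0:ℝ), Real.exp (-t / (r / ((n:ℝ) + 1))) ∂μ := by
      rw [show (fun t => Real.exp (-t / r) * (Polynomial.monomial n a).eval (Real.exp (-t / r)))
            = fun t => a * Real.exp (-t / (r / ((n:ℝ) + 1))) by funext t; exact hfun r hr t]
      exact integral_const_mul a _
    simp only [Function.comp]
    rw [this]
    field_simp

private lemma karamata_sandwich (ε : ℝ) (hε : 0 < ε) :
    ∃ qp qm : Polynomial ℝ,
      (∀ x ∈ Icc (0:ℝ) 1, (if Real.exp (-1) ≤ x then (1:ℝ) else 0) ≤ x * qp.eval x) ∧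
      (∀ x ∈ Icc (0:ℝ) 1, x * qm.eval x ≤ (if Real.exp (-1) ≤ x then (1:ℝ) else 0)) ∧
      (∫ x in (0:ℝ)..1, qp.eval x) ≤ 1 + ε ∧
      1 - ε ≤ ∫ x in (0:ℝ)..1, qm.eval x := by
  set c : ℝ := Real.exp (-1) with hc
  have hc0 : 0 < c := Real.exp_pos _
  have hc1 : c < 1 := by
    rw [hc]; exact Real.exp_lt_one_iff.mpr (by norm_num)
  set e1 : ℝ := Real.exp 1 with he1
  have he1pos : 0 < e1 := Real.exp_pos _
  have hcinv : 1 / c = e1 := by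
    rw [hc, he1, Real.exp_neg, one_div, inv_inv]
  have hlogc : Real.log c = -1 := by rw [hc, Real.log_exp]
  -- choose δ
  obtain ⟨δ, hδ0, hδc, hδ1, hδε⟩ :
      ∃ δ : ℝ, 0 < δ ∧ δ < c ∧ c + δ ≤ 1 ∧ e1 * δ ≤ ε / 2 := by
    refine ⟨min (c/2) (min ((1-c)/2) (ε/(2*e1))), lt_min (by positivity) (lt_min (by linarith) (by positivity)), ?_, ?_, ?_⟩
    · calc min (c/2) (min ((1-c)/2) (ε/(2*e1))) ≤ c/2 := min_le_left _ _
        _ < c := by linarith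
    · have : min (c/2) (min ((1-c)/2) (ε/(2*e1))) ≤ (1-c)/2 :=
        le_trans (min_le_right _ _) (min_le_left _ _)
      linarith
    · have h := le_trans (min_le_right (c/2) _) (min_le_right ((1-c)/2) (ε/(2*e1)))
      calc e1 * min (c/2) (min ((1-c)/2) (ε/(2*e1))) ≤ e1 * (ε/(2*e1)) :=
            mul_le_mul_of_nonneg_left h he1pos.le
        _ = ε / 2 := by field_simp
  set Gp : ℝ → ℝ := fun x => (1 / max x c) * min 1 (max 0 ((x - (c - δ)) / δ)) with hGp_def
  set Gm : ℝ → ℝ := fun x => (1 / max x c) * min 1 (max 0 ((x - c) / δ)) with hGm_def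
  have hmaxne : ∀ x : ℝ, max x c ≠ 0 := fun x => (lt_of_lt_of_le hc0 (le_max_right x c)).ne'
  have hGp_cont : Continuous Gp :=
    (continuous_const.div (continuous_id.max continuous_const) hmaxne).mul
      (continuous_const.min (continuous_const.max
        ((continuous_id.sub continuous_const).div_const δ)))
  have hGm_cont : Continuous Gm :=
    (continuous_const.div (continuous_id.max continuous_const) hmaxne).mul
      (continuous_const.min (continuous_const.max
        ((continuous_id.sub continuous_const).div_const δ)))
  -- pointwise facts
  have hGp_nonneg : ∀ x : ℝ, 0 ≤ Gp x := fun x => by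
    have h1 : 0 ≤ 1 / max x c := by positivity
    have h2 : (0:ℝ) ≤ min 1 (max 0 ((x - (c - δ)) / δ)) :=
      le_min one_pos.le (le_max_left _ _)
    exact mul_nonneg h1 h2
  have hGm_nonneg : ∀ x : ℝ, 0 ≤ Gm x := fun x => by
    have h1 : 0 ≤ 1 / max x c := by positivity
    have h2 : (0:ℝ) ≤ min 1 (max 0 ((x - c) / δ)) :=
      le_min one_pos.le (le_max_left _ _)
    exact mul_nonneg h1 h2
  have hGp_le : ∀ x : ℝ, Gp x ≤ 1 / max x c := fun x => by
    have h2 : min 1 (max 0 ((x - (c - δ)) / δ)) ≤ 1 := min_le_left _ _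
    have h1 : 0 ≤ 1 / max x c := by positivity
    calc Gp x ≤ (1 / max x c) * 1 := mul_le_mul_of_nonneg_left h2 h1
      _ = 1 / max x c := mul_one _
  have hGm_le : ∀ x : ℝ, Gm x ≤ 1 / max x c := fun x => by
    have h2 : min 1 (max 0 ((x - c) / δ)) ≤ 1 := min_le_left _ _
    have h1 : 0 ≤ 1 / max x c := by positivity
    calc Gm x ≤ (1 / max x c) * 1 := mul_le_mul_of_nonneg_left h2 h1
      _ = 1 / max x c := mul_one _
  have hmax_le_e1 : ∀ x : ℝ, 1 / max x c ≤ e1 := fun x => by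
    rw [← hcinv]
    exact one_div_le_one_div_of_le hc0 (le_max_right x c)
  -- key pointwise sandwich with Gp, Gm
  have hGp_ind : ∀ x ∈ Icc (0:ℝ) 1, (if c ≤ x then (1:ℝ) else 0) ≤ x * Gp x := by
    intro x hx
    rcases le_or_gt c x with h | h
    · rw [if_pos h]
      have hx0 : 0 < x := lt_of_lt_of_le hc0 h
      have hmax : max x c = x := max_eq_left h
      have hquot : (1:ℝ) ≤ (x - (c - δ)) / δ := by
        rw [le_div_iff₀ hδ0]; linarith
      have hmin : min 1 (max 0 ((x - (c - δ)) / δ)) = 1 :=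
        min_eq_left (le_max_of_le_right hquot)
      rw [hGp_def]
      simp only [hmax, hmin, mul_one]
      rw [mul_one_div, div_self hx0.ne']
    · rw [if_neg (not_le.mpr h)]
      exact mul_nonneg hx.1 (hGp_nonneg x)
  have hGm_ind : ∀ x ∈ Icc (0:ℝ) 1, x * Gm x ≤ (if c ≤ x then (1:ℝ) else 0) := by
    intro x hx
    rcases le_or_gt c x with h | h
    · rw [if_pos h]
      have hx0 : 0 < x := lt_of_lt_of_le hc0 h
      have hmax : max x c = x := max_eq_left h
      have hmin : min 1 (max 0 ((x - c) / δ)) ≤ 1 := min_le_left _ _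
      calc x * Gm x ≤ x * (1 / max x c) := mul_le_mul_of_nonneg_left (hGm_le x) hx.1
        _ = 1 := by rw [hmax, mul_one_div, div_self hx0.ne']
    · rw [if_neg (not_le.mpr h)]
      have hquot : (x - c) / δ ≤ 0 := div_nonpos_of_nonpos_of_nonneg (by linarith) hδ0.le
      have : Gm x = 0 := by
        rw [hGm_def]
        simp only [max_eq_left hquot, min_eq_right (le_of_lt one_pos), mul_zero]
      rw [this, mul_zero]
  -- integral bounds on Gp, Gm
  have hIntGp : (∫ x in (0:ℝ)..1, Gp x) ≤ 1 + e1 * δ := by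
    have hii : ∀ a b : ℝ, IntervalIntegrable Gp volume a b := fun a b =>
      hGp_cont.intervalIntegrable a b
    have hsplit1 : (∫ x in (0:ℝ)..(c:ℝ), Gp x) + ∫ x in (c:ℝ)..1, Gp x
        = ∫ x in (0:ℝ)..1, Gp x :=
      intervalIntegral.integral_add_adjacent_intervals (hii 0 c) (hii c 1)
    have hsplit2 : (∫ x in (0:ℝ)..(c - δ), Gp x) + ∫ x in (c - δ)..(c:ℝ), Gp x
        = ∫ x in (0:ℝ)..(c:ℝ), Gp x :=
      intervalIntegral.integral_add_adjacent_intervals (hii 0 (c-δ)) (hii (c-δ) c)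
    have h0 : (∫ x in (0:ℝ)..(c - δ), Gp x) = 0 := by
      have heq : EqOn Gp (fun _ => (0:ℝ)) (uIcc 0 (c - δ)) := by
        intro x hx
        rw [uIcc_of_le (by linarith)] at hx
        have hquot : (x - (c - δ)) / δ ≤ 0 :=
          div_nonpos_of_nonpos_of_nonneg (by linarith [hx.2]) hδ0.le
        rw [hGp_def]
        simp [max_eq_left hquot, min_eq_right (le_of_lt one_pos)]
      rw [intervalIntegral.integral_congr heq]
      simp
    have h1 : (∫ x in (c - δ)..(c:ℝ), Gp x) ≤ e1 * δ := by
      have := intervalIntegral.integral_mono_on (by linarith : c - δ ≤ c) (hii _ _)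
        (intervalIntegrable_const (c := e1))
        (fun x _ => le_trans (hGp_le x) (hmax_le_e1 x))
      calc (∫ x in (c - δ)..(c:ℝ), Gp x) ≤ ∫ _ in (c - δ)..(c:ℝ), e1 := this
        _ = (c - (c - δ)) * e1 := by rw [intervalIntegral.integral_const]; simp [smul_eq_mul]
        _ = e1 * δ := by ring
    have h2 : (∫ x in (c:ℝ)..1, Gp x) ≤ 1 := by
      have hiinv : IntervalIntegrable (fun x : ℝ => x⁻¹) volume c 1 := by
        apply intervalIntegral.intervalIntegrable_inv (f := fun x : ℝ => x)
        · intro x hx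
          rw [uIcc_of_le hc1.le] at hx
          exact (lt_of_lt_of_le hc0 hx.1).ne'
        · exact continuousOn_id
      have hle : ∀ x ∈ Icc c 1, Gp x ≤ x⁻¹ := by
        intro x hx
        calc Gp x ≤ 1 / max x c := hGp_le x
          _ = x⁻¹ := by rw [max_eq_left hx.1, one_div]
      have := intervalIntegral.integral_mono_on hc1.le (hii _ _) hiinv hle
      have hinv : (∫ x in (c:ℝ)..1, x⁻¹) = 1 := by
        rw [integral_inv (by rw [uIcc_of_le hc1.le]; exact fun h => absurd h.1 (not_le.mpr hc0))]
        rw [one_div, Real.log_inv, hlogc]; norm_num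
      linarith
    linarith
  have hIntGm : 1 - e1 * δ ≤ ∫ x in (0:ℝ)..1, Gm x := by
    have hii : ∀ a b : ℝ, IntervalIntegrable Gm volume a b := fun a b =>
      hGm_cont.intervalIntegrable a b
    have hsplit1 : (∫ x in (0:ℝ)..(c + δ), Gm x) + ∫ x in (c + δ)..1, Gm x
        = ∫ x in (0:ℝ)..1, Gm x :=
      intervalIntegral.integral_add_adjacent_intervals (hii 0 (c+δ)) (hii (c+δ) 1)
    have h0 : 0 ≤ ∫ x in (0:ℝ)..(c + δ), Gm x :=
      intervalIntegral.integral_nonneg (by linarith) (fun x _ => hGm_nonneg x)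
    have h1 : (∫ x in (c + δ)..1, Gm x) = ∫ x in (c + δ)..1, x⁻¹ := by
      apply intervalIntegral.integral_congr
      intro x hx
      rw [uIcc_of_le hδ1] at hx
      have hcx : c ≤ x := by linarith [hx.1]
      have hx0 : 0 < x := lt_of_lt_of_le hc0 hcx
      have hquot : (1:ℝ) ≤ (x - c) / δ := by
        rw [le_div_iff₀ hδ0]; linarith [hx.1]
      rw [hGm_def]
      simp only [max_eq_left hcx, min_eq_left (le_max_of_le_right hquot), mul_one, one_div]
    have h2 : 1 - e1 * δ ≤ ∫ x in (c + δ)..1, x⁻¹ := by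
      have hcd0 : 0 < c + δ := by linarith
      rw [integral_inv (by rw [uIcc_of_le hδ1]; exact fun h => absurd h.1 (not_le.mpr hcd0))]
      rw [one_div, Real.log_inv]
      have hlog : Real.log (c + δ) ≤ -1 + e1 * δ := by
        have hd : Real.log (c + δ) - Real.log c = Real.log ((c + δ) / c) := by
          rw [Real.log_div (by linarith) hc0.ne']
        have hb : Real.log ((c + δ) / c) ≤ (c + δ) / c - 1 :=
          Real.log_le_sub_one_of_pos (by positivity)
        have hq : (c + δ) / c - 1 = δ * (1 / c) := by field_simp; ring
        rw [hq, hcinv] at hb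
        rw [hlogc] at hd
        linarith
      linarith
    linarith
  -- Weierstrass approximations
  obtain ⟨Pp, hPp⟩ := exists_polynomial_near_of_continuousOn 0 1 Gp
    hGp_cont.continuousOn (ε/8) (by positivity)
  obtain ⟨Pm, hPm⟩ := exists_polynomial_near_of_continuousOn 0 1 Gm
    hGm_cont.continuousOn (ε/8) (by positivity)
  refine ⟨Pp + Polynomial.C (ε/8), Pm - Polynomial.C (ε/8), ?_, ?_, ?_, ?_⟩
  · intro x hx
    have h1 := hGp_ind x hx
    have h2 : Gp x ≤ (Pp + Polynomial.C (ε/8)).eval x := by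
      have := hPp x hx
      rw [abs_lt] at this
      simp only [Polynomial.eval_add, Polynomial.eval_C]
      linarith [this.1]
    calc (if c ≤ x then (1:ℝ) else 0) ≤ x * Gp x := h1
      _ ≤ x * (Pp + Polynomial.C (ε/8)).eval x := mul_le_mul_of_nonneg_left h2 hx.1
  · intro x hx
    have h1 := hGm_ind x hx
    have h2 : (Pm - Polynomial.C (ε/8)).eval x ≤ Gm x := by
      have := hPm x hx
      rw [abs_lt] at this
      simp only [Polynomial.eval_sub, Polynomial.eval_C]
      linarith [this.2]
    calc x * (Pm - Polynomial.C (ε/8)).eval x ≤ x * Gm x :=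
          mul_le_mul_of_nonneg_left h2 hx.1
      _ ≤ (if c ≤ x then (1:ℝ) else 0) := h1
  · have hmono : (∫ x in (0:ℝ)..1, (Pp + Polynomial.C (ε/8)).eval x)
        ≤ ∫ x in (0:ℝ)..1, (Gp x + ε/4) := by
      apply intervalIntegral.integral_mono_on (by norm_num)
        ((Polynomial.continuous _).intervalIntegrable _ _)
        ((hGp_cont.add continuous_const).intervalIntegrable _ _)
      intro x hx
      have := hPp x hx
      rw [abs_lt] at this
      simp only [Polynomial.eval_add, Polynomial.eval_C, Pi.add_apply]
      linarith [this.2]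
    have heq : (∫ x in (0:ℝ)..1, (Gp x + ε/4))
        = (∫ x in (0:ℝ)..1, Gp x) + ε/4 := by
      rw [intervalIntegral.integral_add (hGp_cont.intervalIntegrable _ _)
        (intervalIntegrable_const (c := ε/4))]
      rw [intervalIntegral.integral_const]; simp [smul_eq_mul]
    rw [heq] at hmono
    have : (ε:ℝ)/4 ≤ ε := by linarith
    linarith
  · have hmono : (∫ x in (0:ℝ)..1, (Gm x - ε/4))
        ≤ ∫ x in (0:ℝ)..1, (Pm - Polynomial.C (ε/8)).eval x := by
      apply intervalIntegral.integral_mono_on (by norm_num)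
        ((hGm_cont.sub continuous_const).intervalIntegrable _ _)
        ((Polynomial.continuous _).intervalIntegrable _ _)
      intro x hx
      have := hPm x hx
      rw [abs_lt] at this
      simp only [Polynomial.eval_sub, Polynomial.eval_C, Pi.sub_apply]
      linarith [this.1]
    have heq : (∫ x in (0:ℝ)..1, (Gm x - ε/4))
        = (∫ x in (0:ℝ)..1, Gm x) - ε/4 := by
      rw [intervalIntegral.integral_sub (hGm_cont.intervalIntegrable _ _)
        (intervalIntegrable_const (c := ε/4))]
      rw [intervalIntegral.integral_const]; simp [smul_eq_mul]
    rw [heq] at hmono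
    linarith

/-- **Classical Karamata Tauberian theorem** (as used in the paper). Let `β` be a
nondecreasing right-continuous function (bundled as a `StieltjesFunction`) vanishing on
`(-∞, 0]`, whose Laplace–Stieltjes transform `h(r) = ∫_{[0,∞)} e^{-t/r} dμ_β(t)`
exists for every `r > 0`.  If `h(r)/r → C` as `r → ∞`, then `β(t)/t → C` as `t → ∞`. -/
theorem classical_karamata
    (β : StieltjesFunction ℝ) (hβ0 : ∀ t : ℝ, t ≤ 0 → β t = 0)
    (hInt : ∀ r : ℝ, 0 < r →
      IntegrableOn (fun t => Real.exp (-t / r)) (Set.Ici (0 : ℝ)) β.measure)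
    (C : ℝ)
    (hlim : Tendsto
      (fun r => (∫ t in Set.Ici (0 : ℝ), Real.exp (-t / r) ∂β.measure) / r)
      atTop (nhds C)) :
    Tendsto (fun t => β t / t) atTop (nhds C) := by
  have key := karamata_key β.measure hInt C hlim
  have hC0 : 0 ≤ C := by
    refine ge_of_tendsto hlim ?_
    filter_upwards [eventually_gt_atTop (0:ℝ)] with r hr
    exact div_nonneg (setIntegral_nonneg measurableSet_Ici
      (fun t _ => (Real.exp_pos _).le)) hr.le
  -- β r = (μ (Icc 0 r)).toReal for r > 0
  have hβnn : ∀ t : ℝ, 0 ≤ β t := by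
    intro t
    rcases le_or_gt t 0 with h | h
    · rw [hβ0 t h]
    · rw [← hβ0 0 le_rfl]; exact β.mono h.le
  have hll : Function.leftLim β 0 = 0 := by
    have h1 : Function.leftLim β 0 ≤ β 0 := β.mono.leftLim_le le_rfl
    have h2 : β (-1) ≤ Function.leftLim β 0 := β.mono.le_leftLim (by norm_num)
    have e1 := hβ0 0 le_rfl
    have e2 := hβ0 (-1) (by norm_num)
    linarith
  have hβmeas : ∀ r : ℝ, (β.measure (Icc 0 r)).toReal = β r := by
    intro r
    rw [β.measure_Icc, hll, sub_zero, ENNReal.toReal_ofReal (hβnn r)]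
  have hfin : ∀ r : ℝ, β.measure (Icc 0 r) < ⊤ := by
    intro r
    rw [β.measure_Icc]
    exact ENNReal.ofReal_lt_top
  have hind : ∀ r : ℝ,
      (∫ t in Ici (0:ℝ), (Icc (0:ℝ) r).indicator (fun _ => (1:ℝ)) t ∂β.measure)
        = (β.measure (Icc 0 r)).toReal := by
    intro r
    rw [setIntegral_indicator measurableSet_Icc, setIntegral_const,
      inter_eq_self_of_subset_right Icc_subset_Ici_self, smul_eq_mul, mul_one, measureReal_def]
  have hindInt : ∀ r : ℝ,
      IntegrableOn ((Icc (0:ℝ) r).indicator (fun _ => (1:ℝ))) (Ici (0:ℝ)) β.measure := by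
    intro r
    have h1 : IntegrableOn (fun _ => (1:ℝ)) (Icc (0:ℝ) r) β.measure :=
      integrableOn_const (hfin r).ne
    exact (h1.integrable_indicator measurableSet_Icc).integrableOn
  rw [Metric.tendsto_nhds]
  intro ε hε
  obtain ⟨qp, qm, hqp, hqm, hIp, hIm⟩ := karamata_sandwich (ε / (2 * (C + 1)))
    (by positivity)
  have hε₀ : C * (ε / (2 * (C + 1))) ≤ ε / 2 := by
    rw [← mul_div_assoc, div_le_div_iff₀ (by positivity) (by norm_num)]
    nlinarith [hε.le, hC0]
  have hLp : C * ∫ x in (0:ℝ)..1, qp.eval x < C + ε := by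
    calc C * ∫ x in (0:ℝ)..1, qp.eval x ≤ C * (1 + ε / (2 * (C + 1))) :=
          mul_le_mul_of_nonneg_left hIp hC0
      _ = C + C * (ε / (2 * (C + 1))) := by ring
      _ ≤ C + ε / 2 := by linarith
      _ < C + ε := by linarith
  have hLm : C - ε < C * ∫ x in (0:ℝ)..1, qm.eval x := by
    calc C - ε < C - ε / 2 := by linarith
      _ ≤ C - C * (ε / (2 * (C + 1))) := by linarith
      _ = C * (1 - ε / (2 * (C + 1))) := by ring
      _ ≤ C * ∫ x in (0:ℝ)..1, qm.eval x := mul_le_mul_of_nonneg_left hIm hC0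
  have hup := (key qp).2.eventually_lt_const hLp
  have hlow := (key qm).2.eventually_const_lt hLm
  filter_upwards [eventually_gt_atTop (0:ℝ), hup, hlow] with r hr h1 h2
  -- pointwise sandwich for the integrands
  have hxfact : ∀ t : ℝ, t ∈ Ici (0:ℝ) → Real.exp (-t / r) ∈ Icc (0:ℝ) 1 := by
    intro t ht
    refine ⟨(Real.exp_pos _).le, Real.exp_le_one_iff.mpr ?_⟩
    rw [neg_div]
    simp only [Left.neg_nonpos_iff]
    exact div_nonneg ht hr.le
  have hifeq : ∀ t : ℝ, t ∈ Ici (0:ℝ) →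
      (Icc (0:ℝ) r).indicator (fun _ => (1:ℝ)) t
        = (if Real.exp (-1) ≤ Real.exp (-t / r) then (1:ℝ) else 0) := by
    intro t ht
    have : (t ∈ Icc (0:ℝ) r) ↔ (Real.exp (-1) ≤ Real.exp (-t / r)) := by
      rw [Real.exp_le_exp, mem_Icc, neg_div, neg_le_neg_iff, div_le_one hr]
      exact ⟨fun h => h.2, fun h => ⟨ht, h⟩⟩
    rw [indicator_apply]
    simp only [this]
  have hub : (β.measure (Icc 0 r)).toReal
      ≤ ∫ t in Ici (0:ℝ), Real.exp (-t / r) * qp.eval (Real.exp (-t / r)) ∂β.measure := by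
    rw [← hind r]
    apply setIntegral_mono_on (hindInt r) ((key qp).1 r hr) measurableSet_Ici
    intro t ht
    rw [hifeq t ht]
    exact hqp _ (hxfact t ht)
  have hlb : (∫ t in Ici (0:ℝ), Real.exp (-t / r) * qm.eval (Real.exp (-t / r)) ∂β.measure)
      ≤ (β.measure (Icc 0 r)).toReal := by
    rw [← hind r]
    apply setIntegral_mono_on ((key qm).1 r hr) (hindInt r) measurableSet_Ici
    intro t ht
    rw [hifeq t ht]
    exact hqm _ (hxfact t ht)
  rw [Real.dist_eq, abs_lt]
  have e1 : β r / r ≤ (∫ t in Ici (0:ℝ),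
      Real.exp (-t / r) * qp.eval (Real.exp (-t / r)) ∂β.measure) / r := by
    rw [div_le_div_iff_of_pos_right hr, ← hβmeas r]
    exact hub
  have e2 : (∫ t in Ici (0:ℝ),
      Real.exp (-t / r) * qm.eval (Real.exp (-t / r)) ∂β.measure) / r ≤ β r / r := by
    rw [div_le_div_iff_of_pos_right hr, ← hβmeas r]
    exact hlb
  constructor <;> [linarith [e2, h2]; linarith [e1, h1]]
end
end

section
/- (Proposition 2.4 in singular-value-function form.) Let f : (0,∞) → [0,∞) be nonincreasing and measurable with sup_{t>0} (1/log(1+t))∫₀^t f(s) ds < ∞, and let ω be a state on L^∞((0,∞)) satisfying conditions (2), (4), (5) of Theorem 1.5. For t > 0 set F₁(t) = (1/log(1+t))∫₀^t f(s) ds, F₂(t) = (1/log(1+t))∫_{{s>0 : f(s) > 1/t}} f(s) ds, and, for a fixed C > 0, F₃(t) = (1/log(1+t))∫₀^{max(Ct log t, 0)} f(s) ds. Then F₁, F₂, F₃ are essentially bounded, ω(F₁) = ω(F₂) = ω(F₃), and moreover if any one of F₁, F₂, F₃ converges to a limit as t → ∞ then all three converge to the same limit. -/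
open MeasureTheory Filter Set

noncomputable section
set_option maxHeartbeats 1000000

private lemma log_le_two_sqrt {s : ℝ} (hs : 0 ≤ s) : Real.log (1 + s) ≤ 2 * Real.sqrt s := by
  have h1 : Real.log (1 + s) = 2 * Real.log (Real.sqrt (1 + s)) := by
    rw [Real.log_sqrt (by linarith)]; ring
  have h2 : Real.log (Real.sqrt (1 + s)) ≤ Real.sqrt (1 + s) - 1 :=
    Real.log_le_sub_one_of_pos (Real.sqrt_pos.2 (by linarith))
  have h3 : Real.sqrt (1 + s) ≤ 1 + Real.sqrt s := by
    rw [show (1 : ℝ) + Real.sqrt s = Real.sqrt ((1 + Real.sqrt s) ^ 2) from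
      (Real.sqrt_sq (by positivity)).symm]
    apply Real.sqrt_le_sqrt
    nlinarith [Real.sq_sqrt hs, Real.sqrt_nonneg s]
  linarith

private lemma half_le_log {t : ℝ} (ht : 0 < t) (ht1 : t ≤ 1) : t / 2 ≤ Real.log (1 + t) := by
  have h1 : Real.log (1 + t)⁻¹ ≤ (1 + t)⁻¹ - 1 :=
    Real.log_le_sub_one_of_pos (by positivity)
  rw [Real.log_inv] at h1
  have h2 : (1 + t)⁻¹ - 1 = -(t / (1 + t)) := by field_simp; ring
  rw [h2] at h1
  have h3 : t / (1 + t) ≤ Real.log (1 + t) := by linarith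
  have h4 : t / 2 ≤ t / (1 + t) := by
    apply div_le_div_of_nonneg_left ht.le (by linarith) (by linarith)
  linarith

private lemma eventually_add_mul_log_le_rpow (K L : ℝ) {ε : ℝ} (hε : 0 < ε) :
    ∀ᶠ t : ℝ in atTop, K + L * Real.log (1 + t) ≤ t ^ ε := by
  have hlo := isLittleO_log_rpow_atTop hε
  have hc : (0:ℝ) < (2 * (|L| + 1))⁻¹ := by positivity
  have h1 := hlo.def hc
  have h2 : Tendsto (fun t : ℝ => t ^ ε) atTop atTop := tendsto_rpow_atTop hε
  have h3 : ∀ᶠ t : ℝ in atTop, 2 * (K + |L| * Real.log 2) ≤ t ^ ε :=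
    h2.eventually_ge_atTop _
  filter_upwards [h1, h3, eventually_ge_atTop (1:ℝ)] with t h1 h3 ht1
  have htpos : (0:ℝ) < t := lt_of_lt_of_le one_pos ht1
  have hlog1 : Real.log (1 + t) ≤ Real.log 2 + Real.log t := by
    rw [← Real.log_mul (by norm_num) htpos.ne']
    exact Real.log_le_log (by linarith) (by linarith)
  have hlognn : 0 ≤ Real.log t := Real.log_nonneg ht1
  have hrnn : 0 ≤ t ^ ε := Real.rpow_nonneg htpos.le ε
  rw [Real.norm_eq_abs, Real.norm_eq_abs, abs_of_nonneg hlognn, abs_of_nonneg hrnn] at h1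
  have h5 : |L| * Real.log t ≤ |L| * ((2 * (|L| + 1))⁻¹ * t ^ ε) :=
    mul_le_mul_of_nonneg_left h1 (abs_nonneg L)
  have h6 : |L| * ((2 * (|L| + 1))⁻¹ * t ^ ε) ≤ (1/2) * t ^ ε := by
    rw [← mul_assoc]
    apply mul_le_mul_of_nonneg_right _ hrnn
    rw [mul_inv]
    have : |L| * ((2:ℝ)⁻¹ * (|L| + 1)⁻¹) = (|L| / (|L|+1)) * 2⁻¹ := by ring
    rw [this]
    have : |L| / (|L| + 1) ≤ 1 :=
      div_le_one_of_le₀ (by linarith [abs_nonneg L]) (by positivity)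
    nlinarith
  have hL : L * Real.log (1 + t) ≤ |L| * Real.log (1 + t) :=
    mul_le_mul_of_nonneg_right (le_abs_self L) (Real.log_nonneg (by linarith))
  have hlogt2 : 0 ≤ Real.log 2 := Real.log_nonneg (by norm_num)
  nlinarith [mul_le_mul_of_nonneg_left hlog1 (abs_nonneg L)]

private lemma neBot_ae_mu0_inf_atTop :
    ((MeasureTheory.ae (volume.restrict (Set.Ioi (0:ℝ)))) ⊓ (atTop : Filter ℝ)).NeBot := by
  rw [Filter.inf_neBot_iff]
  intro s hs s' hs'
  obtain ⟨a, ha⟩ := mem_atTop_sets.1 hs'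
  by_contra h
  rw [Set.not_nonempty_iff_eq_empty] at h
  have hsub : Set.Ici (max a 1) ⊆ sᶜ := by
    intro x hx
    intro hxs
    have : x ∈ s ∩ s' := ⟨hxs, ha x (le_trans (le_max_left a 1) hx)⟩
    rw [h] at this; exact this
  have hnull : (volume.restrict (Set.Ioi (0:ℝ))) sᶜ = 0 := MeasureTheory.mem_ae_iff.mp hs
  have : (volume.restrict (Set.Ioi (0:ℝ))) (Set.Ici (max a 1)) = 0 :=
    le_antisymm (le_trans (measure_mono hsub) hnull.le) (by simp)
  rw [Measure.restrict_apply measurableSet_Ici] at this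
  have heq : Set.Ici (max a 1) ∩ Set.Ioi (0:ℝ) = Set.Ici (max a 1) := by
    apply Set.inter_eq_self_of_subset_left
    intro x hx
    exact lt_of_lt_of_le (lt_of_lt_of_le one_pos (le_max_right a 1)) hx
  rw [heq, Real.volume_Ici] at this
  simp at this
private def psi (f : ℝ → ℝ) : ℝ → ℝ := fun t => ∫ s in Set.Ioc 0 t, f s

private def SS (f : ℝ → ℝ) (t : ℝ) : Set ℝ := {s : ℝ | 0 < s ∧ t⁻¹ < f s}

private def lam (f : ℝ → ℝ) (t : ℝ) : ℝ := sSup (insert 0 (SS f t))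

section Psi

variable {f : ℝ → ℝ} (hf0 : ∀ s : ℝ, 0 < s → 0 ≤ f s)
  (hmono : AntitoneOn f (Set.Ioi 0)) (hmeas : Measurable f)

private lemma measurableSet_SS (hmeas : Measurable f) (t : ℝ) : MeasurableSet (SS f t) :=
  measurableSet_Ioi.inter (hmeas measurableSet_Ioi)

private lemma intOn_Ioc_of_pos (hf0 : ∀ s : ℝ, 0 < s → 0 ≤ f s)
    (hmono : AntitoneOn f (Set.Ioi 0)) (hmeas : Measurable f)
    {a : ℝ} (ha : 0 < a) (b : ℝ) : IntegrableOn f (Set.Ioc a b) volume := by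
  apply Measure.integrableOn_of_bounded (M := f a)
  · rw [Real.volume_Ioc]; exact ENNReal.ofReal_ne_top
  · exact hmeas.aestronglyMeasurable
  · refine (ae_restrict_iff' measurableSet_Ioc).2 (Filter.Eventually.of_forall fun s hs => ?_)
    rw [Real.norm_eq_abs, abs_of_nonneg (hf0 s (lt_trans ha hs.1))]
    exact hmono (Set.mem_Ioi.2 ha) (Set.mem_Ioi.2 (lt_trans ha hs.1)) hs.1.le

private lemma intOn_all (hf0 : ∀ s : ℝ, 0 < s → 0 ≤ f s)
    (hmono : AntitoneOn f (Set.Ioi 0)) (hmeas : Measurable f)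
    (h1 : IntegrableOn f (Set.Ioc 0 1) volume) (t : ℝ) :
    IntegrableOn f (Set.Ioc 0 t) volume := by
  rcases le_or_gt t 1 with h | h
  · exact h1.mono_set (Set.Ioc_subset_Ioc_right h)
  · have h2 := intOn_Ioc_of_pos hf0 hmono hmeas one_pos t
    have h3 := h1.union h2
    rwa [Set.Ioc_union_Ioc_eq_Ioc zero_le_one h.le] at h3

private lemma psi_mono (hf0 : ∀ s : ℝ, 0 < s → 0 ≤ f s)
    (hint : ∀ t : ℝ, IntegrableOn f (Set.Ioc 0 t) volume) : Monotone (psi f) := by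
  intro t₁ t₂ h
  apply setIntegral_mono_set (hint t₂)
  · refine (ae_restrict_iff' measurableSet_Ioc).2 (Filter.Eventually.of_forall fun s hs => ?_)
    exact hf0 s hs.1
  · exact Filter.Eventually.of_forall (Set.Ioc_subset_Ioc_right h)

private lemma psi_nonneg (hf0 : ∀ s : ℝ, 0 < s → 0 ≤ f s) (t : ℝ) : 0 ≤ psi f t :=
  setIntegral_nonneg measurableSet_Ioc fun s hs => hf0 s hs.1

private lemma psi_zero : psi f 0 = 0 := by
  simp [psi]

private lemma const_le_psi (hf0 : ∀ s : ℝ, 0 < s → 0 ≤ f s)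
    (hmono : AntitoneOn f (Set.Ioi 0))
    (hint : ∀ t : ℝ, IntegrableOn f (Set.Ioc 0 t) volume)
    {c s : ℝ} (hs : 0 < s) (hc : ∀ x : ℝ, x ∈ Set.Ioc (0:ℝ) s → c ≤ f x) :
    s * c ≤ psi f s := by
  have h1 : ∫ x in Set.Ioc (0:ℝ) s, (c : ℝ) ≤ ∫ x in Set.Ioc (0:ℝ) s, f x :=
    setIntegral_mono_on (integrableOn_const (by rw [Real.volume_Ioc]; exact ENNReal.ofReal_ne_top))
      (hint s) measurableSet_Ioc hc
  rwa [setIntegral_const, Real.volume_real_Ioc_of_le hs.le, sub_zero,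
    smul_eq_mul] at h1

end Psi

section Lam

variable {f : ℝ → ℝ} {N : ℝ}

-- standing hypotheses for the main case
variable (hf0 : ∀ s : ℝ, 0 < s → 0 ≤ f s)
  (hmono : AntitoneOn f (Set.Ioi 0)) (hmeas : Measurable f)
  (hint : ∀ t : ℝ, IntegrableOn f (Set.Ioc 0 t) volume)
  (hN1 : 1 ≤ N)
  (hNbd : ∀ u : ℝ, 0 ≤ u → psi f u ≤ N * Real.log (1 + u))

include hf0 hmono hint hN1 hNbd

private lemma mem_SS_le (ht : 0 < (t:ℝ)) {s : ℝ} (hs : s ∈ SS f t) :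
    s ≤ 4 * N ^ 2 * t ^ 2 := by
  obtain ⟨hs0, hsf⟩ := hs
  have h1 : s * t⁻¹ ≤ psi f s := by
    apply const_le_psi hf0 hmono hint hs0
    intro x hx
    exact le_trans hsf.le (hmono (Set.mem_Ioi.2 hx.1) (Set.mem_Ioi.2 hs0) hx.2)
  have h2 : psi f s ≤ N * (2 * Real.sqrt s) :=
    le_trans (hNbd s hs0.le) (mul_le_mul_of_nonneg_left (log_le_two_sqrt hs0.le) (by linarith))
  have h3 : s ≤ 2 * N * t * Real.sqrt s := by
    have := le_trans h1 h2
    have h4 : s * t⁻¹ * t ≤ N * (2 * Real.sqrt s) * t :=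
      mul_le_mul_of_nonneg_right this ht.le
    rw [mul_assoc, inv_mul_cancel₀ ht.ne', mul_one] at h4
    nlinarith
  nlinarith [sq_nonneg (Real.sqrt s - 2 * N * t), Real.sq_sqrt hs0.le, Real.sqrt_nonneg s]

private lemma bddAbove_SS (ht : 0 < (t:ℝ)) : BddAbove (insert 0 (SS f t)) := by
  refine ⟨4 * N ^ 2 * t ^ 2, ?_⟩
  rintro s (rfl | hs)
  · positivity
  · exact mem_SS_le hf0 hmono hint hN1 hNbd ht hs

private lemma lam_nonneg (ht : 0 < (t:ℝ)) : 0 ≤ lam f t :=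
  le_csSup (bddAbove_SS hf0 hmono hint hN1 hNbd ht) (Set.mem_insert _ _)

private lemma SS_subset_Ioc (ht : 0 < (t:ℝ)) : SS f t ⊆ Set.Ioc 0 (lam f t) :=
  fun s hs => ⟨hs.1, le_csSup (bddAbove_SS hf0 hmono hint hN1 hNbd ht) (Set.mem_insert_of_mem _ hs)⟩

private lemma Ioo_subset_SS (ht : 0 < (t:ℝ)) : Set.Ioo 0 (lam f t) ⊆ SS f t := by
  intro s hs
  obtain ⟨y, hy, hsy⟩ := exists_lt_of_lt_csSup (Set.insert_nonempty _ _) hs.2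
  have hy' : y ∈ SS f t := by
    rcases hy with rfl | hy
    · exact absurd hsy (not_lt.2 hs.1.le)
    · exact hy
  exact ⟨hs.1, lt_of_lt_of_le hy'.2
    (hmono (Set.mem_Ioi.2 hs.1) (Set.mem_Ioi.2 (lt_trans hs.1 hsy)) hsy.le)⟩

private lemma integral_SS_eq (hmeas : Measurable f) (ht : 0 < (t:ℝ)) :
    ∫ s in SS f t, f s = psi f (lam f t) := by
  show ∫ s in SS f t, f s = ∫ s in Set.Ioc 0 (lam f t), f s
  apply setIntegral_congr_set
  rw [MeasureTheory.ae_eq_set]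
  constructor
  · rw [Set.diff_eq_empty.2 (SS_subset_Ioc hf0 hmono hint hN1 hNbd ht)]
    exact measure_empty
  · have hsub : Set.Ioc 0 (lam f t) \ SS f t ⊆ {lam f t} := by
      intro x hx
      simp only [Set.mem_singleton_iff]
      by_contra hne
      have hx1 : x ∈ Set.Ioo 0 (lam f t) := ⟨hx.1.1, lt_of_le_of_ne hx.1.2 hne⟩
      exact hx.2 (Ioo_subset_SS hf0 hmono hint hN1 hNbd ht hx1)
    exact measure_mono_null hsub Real.volume_singleton

private lemma lam_le (ht : 0 < (t:ℝ)) :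
    lam f t ≤ N * t * Real.log (1 + 4 * N ^ 2 * t ^ 2) := by
  have hrhs : 0 ≤ N * t * Real.log (1 + 4 * N ^ 2 * t ^ 2) := by
    have : (0:ℝ) ≤ Real.log (1 + 4 * N ^ 2 * t ^ 2) := Real.log_nonneg (by nlinarith)
    positivity
  apply csSup_le (Set.insert_nonempty _ _)
  rintro s (rfl | hs)
  · exact hrhs
  · have h1 : s * t⁻¹ ≤ psi f s := by
      apply const_le_psi hf0 hmono hint hs.1
      intro x hx
      exact le_trans hs.2.le (hmono (Set.mem_Ioi.2 hx.1) (Set.mem_Ioi.2 hs.1) hx.2)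
    have h2 : psi f s ≤ N * Real.log (1 + 4 * N ^ 2 * t ^ 2) := by
      refine le_trans (hNbd s hs.1.le) (mul_le_mul_of_nonneg_left ?_ (by linarith))
      exact Real.log_le_log (by linarith [hs.1]) (by linarith [mem_SS_le hf0 hmono hint hN1 hNbd ht hs])
    have h4 : s * t⁻¹ * t ≤ N * Real.log (1 + 4 * N ^ 2 * t ^ 2) * t :=
      mul_le_mul_of_nonneg_right (le_trans h1 h2) ht.le
    rw [mul_assoc, inv_mul_cancel₀ ht.ne', mul_one] at h4
    nlinarith

private lemma psi_le_psi_lam_add_one (ht : 0 < (t:ℝ)) :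
    psi f t ≤ psi f (lam f t) + 1 := by
  rcases le_or_gt t (lam f t) with h | h
  · have := psi_mono hf0 hint h
    linarith
  · have hl0 := lam_nonneg hf0 hmono hint hN1 hNbd ht
    have hsplit : psi f t = psi f (lam f t) + ∫ s in Set.Ioc (lam f t) t, f s := by
      rw [psi, psi, ← setIntegral_union (Set.Ioc_disjoint_Ioc_of_le le_rfl) measurableSet_Ioc
        ((hint (lam f t))) ((hint t).mono_set (Set.Ioc_subset_Ioc_left hl0)),
        Set.Ioc_union_Ioc_eq_Ioc hl0 h.le]
    have hb : ∫ s in Set.Ioc (lam f t) t, f s ≤ 1 := by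
      have h1 : ∫ s in Set.Ioc (lam f t) t, f s ≤ ∫ s in Set.Ioc (lam f t) t, (t⁻¹ : ℝ) := by
        apply setIntegral_mono_on ((hint t).mono_set (Set.Ioc_subset_Ioc_left hl0))
          (integrableOn_const (by rw [Real.volume_Ioc]; exact ENNReal.ofReal_ne_top))
          measurableSet_Ioc
        intro x hx
        have hx0 : 0 < x := lt_of_le_of_lt hl0 hx.1
        by_contra hcon
        push_neg at hcon
        have hxS : x ∈ SS f t := ⟨hx0, hcon⟩
        have := (SS_subset_Ioc hf0 hmono hint hN1 hNbd ht hxS).2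
        linarith [hx.1]
      rw [setIntegral_const, Real.volume_real_Ioc_of_le h.le,
        smul_eq_mul] at h1
      have : (t - lam f t) * t⁻¹ ≤ t * t⁻¹ :=
        mul_le_mul_of_nonneg_right (by linarith) (by positivity)
      rw [mul_inv_cancel₀ ht.ne'] at this
      linarith
    linarith

end Lam
/-- Lebesgue measure on `(0,∞)`, i.e. Lebesgue measure on `ℝ` restricted to `Set.Ioi 0`. -/
def μ₀ : Measure ℝ := volume.restrict (Set.Ioi 0)

/-- `f` is (a representative of) an element of `L^∞(μ)`: essentially bounded and
(a.e.-strongly) measurable. -/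
def MemLinf (μ : Measure ℝ) (f : ℝ → ℝ) : Prop := MeasureTheory.MemLp f ⊤ μ

/-- A state on `L^∞(μ)`, encoded as a real functional on representatives: it is linear on
essentially bounded measurable functions, depends only on the a.e.-equivalence class,
is positive (`f ≥ 0` a.e. implies `ω f ≥ 0`), and satisfies `ω(1) = 1`. -/
structure LinfState (μ : Measure ℝ) where
  toFun : (ℝ → ℝ) → ℝ
  map_add : ∀ f g : ℝ → ℝ, MemLinf μ f → MemLinf μ g → toFun (f + g) = toFun f + toFun g
  map_smul : ∀ (c : ℝ) (f : ℝ → ℝ), MemLinf μ f → toFun (c • f) = c * toFun f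
  congr_ae : ∀ f g : ℝ → ℝ, f =ᵐ[μ] g → toFun f = toFun g
  nonneg : ∀ f : ℝ → ℝ, MemLinf μ f → (0 ≤ᵐ[μ] f) → 0 ≤ toFun f
  map_one : toFun 1 = 1

/-- The Cesàro mean `M` on functions on `(0,∞)`:
`M f (t) = (1/log t) ∫₁ᵗ f(s) ds/s` for `t > 1`, and `0` for `t ≤ 1`. -/
def cesaroMean (f : ℝ → ℝ) : ℝ → ℝ := fun t =>
  if 1 < t then (Real.log t)⁻¹ * ∫ s in Set.Ioc (1 : ℝ) t, f s / s else 0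

/-- Condition (1) of Theorem 1.5: `ω` vanishes on (classes of) functions in `C₀((0,∞))`. -/
def Cond1 (ω : LinfState μ₀) : Prop :=
  ∀ f : ℝ → ℝ,
    (∃ g : ZeroAtInftyContinuousMap (Set.Ioi (0 : ℝ)) ℝ,
      ∀ᵐ x ∂μ₀, ∀ hx : x ∈ Set.Ioi (0 : ℝ), f x = g ⟨x, hx⟩) → ω.toFun f = 0

/-- Condition (2) of Theorem 1.5: `ω f` lies between the essential liminf and the essential
limsup of `f` at `+∞`. -/
def Cond2 (ω : LinfState μ₀) : Prop :=
  ∀ f : ℝ → ℝ, MemLinf μ₀ f →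
    Filter.liminf f ((ae μ₀) ⊓ atTop) ≤ ω.toFun f ∧
      ω.toFun f ≤ Filter.limsup f ((ae μ₀) ⊓ atTop)

/-- Condition (3) of Theorem 1.5: `ω` vanishes on functions with compact essential support. -/
def Cond3 (ω : LinfState μ₀) : Prop :=
  ∀ f : ℝ → ℝ, (∃ K : Set ℝ, IsCompact K ∧ ∀ᵐ x ∂μ₀, x ∉ K → f x = 0) → ω.toFun f = 0

/-- Condition (4) of Theorem 1.5: dilation invariance, `ω (D_c f) = ω f` for all `c > 0`. -/
def Cond4 (ω : LinfState μ₀) : Prop :=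
  ∀ c : ℝ, 0 < c → ∀ f : ℝ → ℝ, MemLinf μ₀ f →
    ω.toFun (fun x => f (c * x)) = ω.toFun f

/-- Condition (5) of Theorem 1.5: power invariance, `ω (P^a f) = ω f` for all `a > 0`. -/
def Cond5 (ω : LinfState μ₀) : Prop :=
  ∀ a : ℝ, 0 < a → ∀ f : ℝ → ℝ, MemLinf μ₀ f →
    ω.toFun (fun x => f (x ^ a)) = ω.toFun f

/-- Condition (6) of Theorem 1.5: invariance under the Cesàro mean `M`. -/
def Cond6 (ω : LinfState μ₀) : Prop :=
  ∀ f : ℝ → ℝ, MemLinf μ₀ f → ω.toFun (cesaroMean f) = ω.toFun f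

/-- **Proposition 2.4, singular-value-function form.**  Let `f : (0,∞) → [0,∞)` be
nonincreasing and measurable with `sup_{t>0} (1/log(1+t)) ∫₀ᵗ f < ∞`, and let `ω` be a
state satisfying conditions (2), (4), (5) of Theorem 1.5.  With
`F₁ t = (1/log(1+t)) ∫₀ᵗ f`, `F₂ t = (1/log(1+t)) ∫_{{s>0 : f s > 1/t}} f`, and
`F₃ t = (1/log(1+t)) ∫₀^{max(C t log t, 0)} f` (all for `t > 0`, extended by `0`),
the three functions are essentially bounded, `ω F₁ = ω F₂ = ω F₃`, and if any of them has a
limit at `+∞` then all three converge to the same limit. -/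
theorem dixmier_trace_distribution_function_form
    (ω : LinfState μ₀) (h2 : Cond2 ω) (h4 : Cond4 ω) (h5 : Cond5 ω)
    (f : ℝ → ℝ) (hf0 : ∀ s : ℝ, 0 < s → 0 ≤ f s)
    (hmono : AntitoneOn f (Set.Ioi 0)) (hmeas : Measurable f)
    (hsup : ∃ N : ℝ, ∀ t : ℝ, 0 < t →
      (Real.log (1 + t))⁻¹ * ∫ s in Set.Ioc (0 : ℝ) t, f s ≤ N)
    (C : ℝ) (hC : 0 < C)
    (F₁ F₂ F₃ : ℝ → ℝ)
    (hF₁ : F₁ = fun t => if 0 < t then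
      (Real.log (1 + t))⁻¹ * ∫ s in Set.Ioc (0 : ℝ) t, f s else 0)
    (hF₂ : F₂ = fun t => if 0 < t then
      (Real.log (1 + t))⁻¹ * ∫ s in {s : ℝ | 0 < s ∧ t⁻¹ < f s}, f s else 0)
    (hF₃ : F₃ = fun t => if 0 < t then
      (Real.log (1 + t))⁻¹ * ∫ s in Set.Ioc (0 : ℝ) (max (C * t * Real.log t) 0), f s
      else 0) :
    (MemLinf μ₀ F₁ ∧ MemLinf μ₀ F₂ ∧ MemLinf μ₀ F₃) ∧
    (ω.toFun F₁ = ω.toFun F₂ ∧ ω.toFun F₂ = ω.toFun F₃) ∧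
    (∀ B : ℝ,
      (Tendsto F₁ atTop (nhds B) ∨ Tendsto F₂ atTop (nhds B) ∨ Tendsto F₃ atTop (nhds B)) →
      (Tendsto F₁ atTop (nhds B) ∧ Tendsto F₂ atTop (nhds B) ∧ Tendsto F₃ atTop (nhds B))) := by
  obtain ⟨N₀, hsup0⟩ := hsup
  by_cases hintc : IntegrableOn f (Set.Ioc 0 1) volume
  · -- main case : f is locally integrable near 0
    set N : ℝ := max N₀ 1 with hNdef
    have hN1 : (1:ℝ) ≤ N := le_max_right _ _
    have hN0 : (0:ℝ) < N := lt_of_lt_of_le one_pos hN1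
    have hint : ∀ t : ℝ, IntegrableOn f (Set.Ioc 0 t) volume :=
      intOn_all hf0 hmono hmeas hintc
    have hlogpos : ∀ t : ℝ, 0 < t → 0 < Real.log (1 + t) :=
      fun t ht => Real.log_pos (by linarith)
    have hsupN : ∀ t : ℝ, 0 < t → (Real.log (1 + t))⁻¹ * psi f t ≤ N :=
      fun t ht => le_trans (hsup0 t ht) (le_max_left _ _)
    have hNbd : ∀ u : ℝ, 0 ≤ u → psi f u ≤ N * Real.log (1 + u) := by
      intro u hu
      rcases eq_or_lt_of_le hu with rfl | hu
      · rw [psi_zero]; simp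
      · have hlog := hlogpos u hu
        have h := hsupN u hu
        calc psi f u = Real.log (1 + u) * ((Real.log (1 + u))⁻¹ * psi f u) := by
              rw [← mul_assoc, mul_inv_cancel₀ hlog.ne', one_mul]
        _ ≤ Real.log (1 + u) * N := mul_le_mul_of_nonneg_left h hlog.le
        _ = N * Real.log (1 + u) := mul_comm _ _
    -- pointwise formulas
    have hF₁eq : ∀ t : ℝ, 0 < t → F₁ t = (Real.log (1 + t))⁻¹ * psi f t := by
      intro t ht; rw [hF₁]; simp only [if_pos ht]; rfl
    have hF₂eq : ∀ t : ℝ, 0 < t → F₂ t = (Real.log (1 + t))⁻¹ * psi f (lam f t) := by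
      intro t ht; rw [hF₂]; simp only [if_pos ht]
      congr 1
      exact integral_SS_eq hf0 hmono hint hN1 hNbd hmeas ht
    have hF₃eq : ∀ t : ℝ, 0 < t →
        F₃ t = (Real.log (1 + t))⁻¹ * psi f (max (C * t * Real.log t) 0) := by
      intro t ht; rw [hF₃]; simp only [if_pos ht]; rfl
    have hF₁neg : ∀ t : ℝ, ¬ (0 < t) → F₁ t = 0 := by intro t ht; rw [hF₁]; simp [ht]
    have hF₂neg : ∀ t : ℝ, ¬ (0 < t) → F₂ t = 0 := by intro t ht; rw [hF₂]; simp [ht]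
    have hF₃neg : ∀ t : ℝ, ¬ (0 < t) → F₃ t = 0 := by intro t ht; rw [hF₃]; simp [ht]
    -- nonnegativity
    have hF₁nn : ∀ t : ℝ, 0 ≤ F₁ t := by
      intro t
      by_cases ht : 0 < t
      · rw [hF₁eq t ht]
        exact mul_nonneg (inv_nonneg.2 (hlogpos t ht).le) (psi_nonneg hf0 _)
      · rw [hF₁neg t ht]
    have hF₂nn : ∀ t : ℝ, 0 ≤ F₂ t := by
      intro t
      by_cases ht : 0 < t
      · rw [hF₂eq t ht]
        exact mul_nonneg (inv_nonneg.2 (hlogpos t ht).le) (psi_nonneg hf0 _)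
      · rw [hF₂neg t ht]
    have hF₃nn : ∀ t : ℝ, 0 ≤ F₃ t := by
      intro t
      by_cases ht : 0 < t
      · rw [hF₃eq t ht]
        exact mul_nonneg (inv_nonneg.2 (hlogpos t ht).le) (psi_nonneg hf0 _)
      · rw [hF₃neg t ht]
    -- upper bounds
    have hF₁bd : ∀ t : ℝ, F₁ t ≤ N := by
      intro t
      by_cases ht : 0 < t
      · rw [hF₁eq t ht]; exact hsupN t ht
      · rw [hF₁neg t ht]; linarith
    have hub : ∀ K : ℝ, 0 ≤ K → ∀ t : ℝ, 1 < t → ∀ u : ℝ, 0 ≤ u → u ≤ K * t ^ 2 →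
        (Real.log (1 + t))⁻¹ * psi f u ≤ N * (Real.log (1 + K) * (Real.log 2)⁻¹ + 2) := by
      intro K hK t ht u hu huK
      have hlt : 0 < Real.log (1 + t) := hlogpos t (by linarith)
      have hlog2 : (0:ℝ) < Real.log 2 := Real.log_pos (by norm_num)
      have hlK : (0:ℝ) ≤ Real.log (1 + K) := Real.log_nonneg (by linarith)
      have h1 : psi f u ≤ N * (Real.log (1 + K) + 2 * Real.log (1 + t)) := by
        refine le_trans (hNbd u hu) (mul_le_mul_of_nonneg_left ?_ hN0.le)
        have h2 : Real.log (1 + u) ≤ Real.log ((1 + K) * (1 + t) ^ 2) :=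
          Real.log_le_log (by linarith) (by nlinarith)
        rwa [Real.log_mul (by linarith) (by positivity), Real.log_pow,
          Nat.cast_ofNat] at h2
      have h3 : (Real.log (1 + t))⁻¹ ≤ (Real.log 2)⁻¹ := by
        apply inv_anti₀ hlog2
        exact Real.log_le_log (by norm_num) (by linarith)
      have hinv2 : (Real.log (1 + t))⁻¹ * Real.log (1 + t) = 1 := inv_mul_cancel₀ hlt.ne'
      calc (Real.log (1 + t))⁻¹ * psi f u
          ≤ (Real.log (1 + t))⁻¹ * (N * (Real.log (1 + K) + 2 * Real.log (1 + t))) :=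
            mul_le_mul_of_nonneg_left h1 (by positivity)
      _ = N * Real.log (1 + K) * (Real.log (1 + t))⁻¹
            + 2 * N * ((Real.log (1 + t))⁻¹ * Real.log (1 + t)) := by ring
      _ = N * Real.log (1 + K) * (Real.log (1 + t))⁻¹ + 2 * N := by rw [hinv2, mul_one]
      _ ≤ N * Real.log (1 + K) * (Real.log 2)⁻¹ + 2 * N := by
            have hm := mul_le_mul_of_nonneg_left h3 (mul_nonneg hN0.le hlK)
            nlinarith
      _ = N * (Real.log (1 + K) * (Real.log 2)⁻¹ + 2) := by ring
    have hlam_sq : ∀ t : ℝ, 0 < t → lam f t ≤ 4 * N ^ 2 * t ^ 2 := by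
      intro t ht
      apply csSup_le (Set.insert_nonempty _ _)
      rintro s (rfl | hs)
      · positivity
      · exact mem_SS_le hf0 hmono hint hN1 hNbd ht hs
    set M₂ : ℝ := max (8 * N ^ 3) (N * (Real.log (1 + 4 * N ^ 2) * (Real.log 2)⁻¹ + 2)) with hM₂def
    have hM₂0 : (0:ℝ) ≤ M₂ := le_trans (by positivity) (le_max_left _ _)
    have hF₂bd : ∀ t : ℝ, F₂ t ≤ M₂ := by
      intro t
      by_cases ht : 0 < t
      · rw [hF₂eq t ht]
        have hl0 := lam_nonneg hf0 hmono hint hN1 hNbd ht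
        have hlub := hlam_sq t ht
        rcases le_or_gt t 1 with h1 | h1
        · have hlogl : Real.log (1 + lam f t) ≤ lam f t := by
            have := Real.log_le_sub_one_of_pos (show (0:ℝ) < 1 + lam f t by linarith)
            linarith
          have hpsil : psi f (lam f t) ≤ N * (4 * N ^ 2 * t ^ 2) := by
            refine le_trans (hNbd _ hl0) ?_
            have : Real.log (1 + lam f t) ≤ 4 * N ^ 2 * t ^ 2 := le_trans hlogl hlub
            nlinarith
          have hinv : (Real.log (1 + t))⁻¹ ≤ 2 * t⁻¹ := by
            have hhalf := half_le_log ht h1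
            have h2 : (0:ℝ) < t / 2 := by linarith
            calc (Real.log (1 + t))⁻¹ ≤ (t / 2)⁻¹ := inv_anti₀ h2 hhalf
            _ = 2 * t⁻¹ := by rw [div_eq_mul_inv, mul_inv, inv_inv]; ring
          calc (Real.log (1 + t))⁻¹ * psi f (lam f t)
              ≤ (2 * t⁻¹) * (N * (4 * N ^ 2 * t ^ 2)) :=
                mul_le_mul hinv hpsil (psi_nonneg hf0 _)
                  (by positivity)
          _ = 8 * N ^ 3 * t * (t⁻¹ * t) := by ring
          _ = 8 * N ^ 3 * t := by rw [inv_mul_cancel₀ ht.ne', mul_one]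
          _ ≤ 8 * N ^ 3 := by nlinarith [pow_nonneg hN0.le 3]
          _ ≤ M₂ := le_max_left _ _
        · exact le_trans (hub (4 * N ^ 2) (by positivity) t h1 _ hl0 hlub)
            (le_max_right _ _)
      · rw [hF₂neg t ht]; exact hM₂0
    set M₃ : ℝ := N * (Real.log (1 + C) * (Real.log 2)⁻¹ + 2) with hM₃def
    have hM₃0 : (0:ℝ) ≤ M₃ := by
      have h1 : (0:ℝ) ≤ Real.log (1 + C) := Real.log_nonneg (by linarith)
      have hlog2 : (0:ℝ) < Real.log 2 := Real.log_pos (by norm_num)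
      positivity
    have hF₃bd : ∀ t : ℝ, F₃ t ≤ M₃ := by
      intro t
      by_cases ht : 0 < t
      · rcases le_or_gt t 1 with h1 | h1
        · have hmax : max (C * t * Real.log t) 0 = 0 := by
            apply max_eq_right
            exact mul_nonpos_of_nonneg_of_nonpos (by positivity) (Real.log_nonpos ht.le h1)
          rw [hF₃eq t ht, hmax, psi_zero, mul_zero]
          exact hM₃0
        · rw [hF₃eq t ht]
          apply hub C hC.le t h1 _ (le_max_right _ _)
          apply max_le _ (by positivity)
          have hlt : Real.log t ≤ t := by
            have := Real.log_le_sub_one_of_pos ht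
            linarith
          nlinarith [mul_le_mul_of_nonneg_left hlt (by positivity : (0:ℝ) ≤ C * t)]
      · rw [hF₃neg t ht]; exact hM₃0
    -- measurability
    have hpsimono := psi_mono hf0 hint
    have hloginv_meas : Measurable (fun t : ℝ => (Real.log (1 + t))⁻¹) :=
      ((Real.measurable_log.comp (measurable_const.add measurable_id)).inv)
    have measF₁ : Measurable F₁ := by
      rw [hF₁]
      exact Measurable.ite measurableSet_Ioi
        (hloginv_meas.mul hpsimono.measurable) measurable_const
    have measF₃ : Measurable F₃ := by
      rw [hF₃]
      refine Measurable.ite measurableSet_Ioi (hloginv_meas.mul ?_) measurable_const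
      exact hpsimono.measurable.comp
        (((measurable_const.mul measurable_id).mul Real.measurable_log).max measurable_const)
    have measF₂ : Measurable F₂ := by
      have hGmono : Monotone (fun t : ℝ => if 0 < t then ∫ s in SS f t, f s else 0) := by
        intro t₁ t₂ h12
        have hG2 : (0:ℝ) ≤ if 0 < t₂ then ∫ s in SS f t₂, f s else 0 := by
          split
          · exact setIntegral_nonneg (measurableSet_SS hmeas t₂) fun s hs => hf0 s hs.1
          · exact le_refl 0
        by_cases h1 : 0 < t₁
        · have h2 : 0 < t₂ := lt_of_lt_of_le h1 h12
          simp only [if_pos h1, if_pos h2]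
          apply setIntegral_mono_set
          · exact (hint (lam f t₂)).mono_set (SS_subset_Ioc hf0 hmono hint hN1 hNbd h2)
          · exact (ae_restrict_iff' (measurableSet_SS hmeas t₂)).2
              (Filter.Eventually.of_forall fun s hs => hf0 s hs.1)
          · apply Filter.Eventually.of_forall
            intro s hs
            exact ⟨hs.1, lt_of_le_of_lt (inv_anti₀ h1 h12) hs.2⟩
        · simp only [if_neg h1]
          exact hG2
      have hrw : F₂ = fun t : ℝ => if 0 < t then
          (Real.log (1 + t))⁻¹ * (if 0 < t then ∫ s in SS f t, f s else 0) else 0 := by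
        rw [hF₂]; funext t
        by_cases ht : 0 < t
        · simp only [if_pos ht]; rfl
        · simp only [if_neg ht]
      rw [hrw]
      exact Measurable.ite measurableSet_Ioi
        (hloginv_meas.mul hGmono.measurable) measurable_const
    -- membership in L∞
    have hmemF₁ : MemLinf μ₀ F₁ := by
      apply memLp_top_of_bound measF₁.aestronglyMeasurable N
      exact Filter.Eventually.of_forall fun t => by
        rw [Real.norm_eq_abs, abs_of_nonneg (hF₁nn t)]; exact hF₁bd t
    have hmemF₂ : MemLinf μ₀ F₂ := by
      apply memLp_top_of_bound measF₂.aestronglyMeasurable M₂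
      exact Filter.Eventually.of_forall fun t => by
        rw [Real.norm_eq_abs, abs_of_nonneg (hF₂nn t)]; exact hF₂bd t
    have hmemF₃ : MemLinf μ₀ F₃ := by
      apply memLp_top_of_bound measF₃.aestronglyMeasurable M₃
      exact Filter.Eventually.of_forall fun t => by
        rw [Real.norm_eq_abs, abs_of_nonneg (hF₃nn t)]; exact hF₃bd t
    have hcomp_mem : ∀ ε : ℝ, 0 < ε → MemLinf μ₀ (fun x : ℝ => F₁ (x ^ (1 + ε))) := by
      intro ε hε
      have hm : Measurable (fun x : ℝ => x ^ (1 + ε)) :=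
        (Real.continuous_rpow_const (by linarith)).measurable
      apply memLp_top_of_bound (measF₁.comp hm).aestronglyMeasurable N
      refine Filter.Eventually.of_forall fun t => ?_
      have hb := hF₁bd (t ^ (1 + ε))
      have h0 := hF₁nn (t ^ (1 + ε))
      rw [Real.norm_eq_abs]
      show |F₁ (t ^ (1 + ε))| ≤ N
      rw [abs_of_nonneg h0]
      exact hb
    -- eventual estimates
    have hlogT : Tendsto (fun t : ℝ => Real.log (1 + t)) atTop atTop :=
      Real.tendsto_log_atTop.comp (tendsto_atTop_add_const_left _ 1 tendsto_id)
    have hE1 : ∀ δ : ℝ, 0 < δ → ∀ᶠ t in atTop, F₁ t ≤ F₂ t + δ := by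
      intro δ hδ
      filter_upwards [eventually_gt_atTop (0:ℝ), hlogT.eventually_ge_atTop δ⁻¹] with t ht hlt
      rw [hF₁eq t ht, hF₂eq t ht]
      have hlp := hlogpos t ht
      have h1 := psi_le_psi_lam_add_one hf0 hmono hint hN1 hNbd ht
      have hinvle : (Real.log (1 + t))⁻¹ ≤ δ := by
        rw [← inv_inv δ]
        exact inv_anti₀ (by positivity) hlt
      calc (Real.log (1 + t))⁻¹ * psi f t
          ≤ (Real.log (1 + t))⁻¹ * (psi f (lam f t) + 1) :=
            mul_le_mul_of_nonneg_left h1 (by positivity)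
      _ = (Real.log (1 + t))⁻¹ * psi f (lam f t) + (Real.log (1 + t))⁻¹ := by ring
      _ ≤ (Real.log (1 + t))⁻¹ * psi f (lam f t) + δ := by linarith
    have hcalc : ∀ ε : ℝ, 0 < ε → ∀ t : ℝ, 1 < t →
        Real.log (1 + t ^ (1 + ε)) ≤ (1 + 2 * ε) * Real.log (1 + t) →
        ∀ v : ℝ, v ≤ t ^ (1 + ε) →
        (Real.log (1 + t))⁻¹ * psi f v ≤ (1 + 2 * ε) * F₁ (t ^ (1 + ε)) := by
      intro ε hε t ht hkey v hv
      have ht0 : (0:ℝ) < t := by linarith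
      have hu0 : (0:ℝ) < t ^ (1 + ε) := Real.rpow_pos_of_pos ht0 _
      have hlp := hlogpos t ht0
      have hlu := hlogpos _ hu0
      have hF1u : psi f (t ^ (1 + ε)) = Real.log (1 + t ^ (1 + ε)) * F₁ (t ^ (1 + ε)) := by
        rw [hF₁eq _ hu0, ← mul_assoc, mul_inv_cancel₀ hlu.ne', one_mul]
      have hF1nn := hF₁nn (t ^ (1 + ε))
      calc (Real.log (1 + t))⁻¹ * psi f v
          ≤ (Real.log (1 + t))⁻¹ * psi f (t ^ (1 + ε)) :=
            mul_le_mul_of_nonneg_left (hpsimono hv) (by positivity)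
      _ = (Real.log (1 + t))⁻¹ * (Real.log (1 + t ^ (1 + ε)) * F₁ (t ^ (1 + ε))) := by
            rw [hF1u]
      _ ≤ (Real.log (1 + t))⁻¹ * ((1 + 2 * ε) * Real.log (1 + t) * F₁ (t ^ (1 + ε))) := by
            exact mul_le_mul_of_nonneg_left
              (mul_le_mul_of_nonneg_right hkey hF1nn) (by positivity)
      _ = (1 + 2 * ε) * F₁ (t ^ (1 + ε)) * ((Real.log (1 + t))⁻¹ * Real.log (1 + t)) := by
            ring
      _ = (1 + 2 * ε) * F₁ (t ^ (1 + ε)) := by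
            rw [inv_mul_cancel₀ hlp.ne', mul_one]
    have hkeylog : ∀ ε : ℝ, 0 < ε → ∀ᶠ t in atTop,
        Real.log (1 + t ^ (1 + ε)) ≤ (1 + 2 * ε) * Real.log (1 + t) := by
      intro ε hε
      filter_upwards [eventually_gt_atTop (1:ℝ),
        Real.tendsto_log_atTop.eventually_ge_atTop (Real.log 2 / ε)] with t ht hlt
      have ht0 : (0:ℝ) < t := lt_trans one_pos ht
      have hu1 : (1:ℝ) ≤ t ^ (1 + ε) := Real.one_le_rpow ht.le (by linarith)
      have h1 : Real.log (1 + t ^ (1 + ε)) ≤ Real.log (2 * t ^ (1 + ε)) :=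
        Real.log_le_log (by linarith) (by linarith)
      rw [Real.log_mul (by norm_num) (by positivity), Real.log_rpow ht0] at h1
      have h2 : Real.log 2 ≤ ε * Real.log t := by
        rw [div_le_iff₀ hε] at hlt; linarith
      have h3 : Real.log t ≤ Real.log (1 + t) := Real.log_le_log ht0 (by linarith)
      have hlt0 : (0:ℝ) ≤ Real.log t := Real.log_nonneg ht.le
      nlinarith
    have ht_rpow : ∀ ε : ℝ, ∀ t : ℝ, 0 < t → t * t ^ ε = t ^ (1 + ε) := by
      intro ε t ht0
      rw [Real.rpow_add ht0, Real.rpow_one]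
    have hE2 : ∀ ε : ℝ, 0 < ε → ∀ᶠ t in atTop, F₂ t ≤ (1 + 2 * ε) * F₁ (t ^ (1 + ε)) := by
      intro ε hε
      filter_upwards [eventually_gt_atTop (1:ℝ), hkeylog ε hε,
        eventually_add_mul_log_le_rpow (N * Real.log (1 + 4 * N ^ 2)) (2 * N) hε]
        with t ht hkey hbd
      have ht0 : (0:ℝ) < t := lt_trans one_pos ht
      rw [hF₂eq t ht0]
      apply hcalc ε hε t ht hkey
      have h1 := lam_le hf0 hmono hint hN1 hNbd ht0
      have h2 : Real.log (1 + 4 * N ^ 2 * t ^ 2)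
          ≤ Real.log (1 + 4 * N ^ 2) + 2 * Real.log (1 + t) := by
        have h0 : Real.log (1 + 4 * N ^ 2 * t ^ 2) ≤ Real.log ((1 + 4 * N ^ 2) * (1 + t) ^ 2) :=
          Real.log_le_log (by positivity) (by nlinarith)
        rwa [Real.log_mul (by positivity) (by positivity), Real.log_pow, Nat.cast_ofNat] at h0
      have h3 : lam f t ≤ t * (N * Real.log (1 + 4 * N ^ 2) + 2 * N * Real.log (1 + t)) := by
        nlinarith [mul_le_mul_of_nonneg_left h2 (by positivity : (0:ℝ) ≤ N * t)]
      have h4 : t * (N * Real.log (1 + 4 * N ^ 2) + 2 * N * Real.log (1 + t)) ≤ t * t ^ ε := by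
        apply mul_le_mul_of_nonneg_left _ ht0.le
        calc N * Real.log (1 + 4 * N ^ 2) + 2 * N * Real.log (1 + t)
            = N * Real.log (1 + 4 * N ^ 2) + (2 * N) * Real.log (1 + t) := by ring
        _ ≤ t ^ ε := hbd
      calc lam f t ≤ t * t ^ ε := le_trans h3 h4
      _ = t ^ (1 + ε) := ht_rpow ε t ht0
    have hE3 : ∀ᶠ t in atTop, F₁ t ≤ F₃ t := by
      filter_upwards [eventually_gt_atTop (1:ℝ),
        Real.tendsto_log_atTop.eventually_ge_atTop C⁻¹] with t ht hlog
      have ht0 : (0:ℝ) < t := lt_trans one_pos ht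
      rw [hF₁eq t ht0, hF₃eq t ht0]
      apply mul_le_mul_of_nonneg_left _ (inv_nonneg.2 (hlogpos t ht0).le)
      apply hpsimono
      have h1 : (1:ℝ) ≤ C * Real.log t := by
        have := mul_le_mul_of_nonneg_left hlog hC.le
        rwa [mul_inv_cancel₀ hC.ne'] at this
      have h2 : t ≤ C * t * Real.log t := by nlinarith
      exact le_trans h2 (le_max_left _ _)
    have hE4 : ∀ ε : ℝ, 0 < ε → ∀ᶠ t in atTop, F₃ t ≤ (1 + 2 * ε) * F₁ (t ^ (1 + ε)) := by
      intro ε hε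
      filter_upwards [eventually_gt_atTop (1:ℝ), hkeylog ε hε,
        eventually_add_mul_log_le_rpow 0 C hε] with t ht hkey hbd
      have ht0 : (0:ℝ) < t := lt_trans one_pos ht
      rw [hF₃eq t ht0]
      apply hcalc ε hε t ht hkey
      apply max_le _ (Real.rpow_nonneg ht0.le _)
      have h0 : Real.log t ≤ Real.log (1 + t) := Real.log_le_log ht0 (by linarith)
      have h1 : C * Real.log t ≤ t ^ ε := by
        have := hbd
        rw [zero_add] at this
        nlinarith
      calc C * t * Real.log t = t * (C * Real.log t) := by ring
      _ ≤ t * t ^ ε := mul_le_mul_of_nonneg_left h1 ht0.le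
      _ = t ^ (1 + ε) := ht_rpow ε t ht0
    -- ω machinery
    haveI hNB : ((MeasureTheory.ae μ₀) ⊓ (atTop : Filter ℝ)).NeBot := neBot_ae_mu0_inf_atTop
    have homega_mono : ∀ g h : ℝ → ℝ, MemLinf μ₀ g → MemLinf μ₀ h →
        (∃ M : ℝ, ∀ t, h t - g t ≤ M) → (∀ᶠ t in atTop, g t ≤ h t) →
        ω.toFun g ≤ ω.toFun h := by
      rintro g h hg hh ⟨M, hM⟩ hle
      have hd : MemLinf μ₀ (h - g) := MeasureTheory.MemLp.sub hh hg
      have h0 : (0:ℝ) ≤ ω.toFun (h - g) := by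
        refine le_trans ?_ (h2 (h - g) hd).1
        apply Filter.le_liminf_of_le
        · exact (Filter.isBoundedUnder_of ⟨M, fun t => hM t⟩).isCoboundedUnder_ge
        · exact ((hle.mono fun t ht => by
            simp only [Pi.sub_apply]; linarith).filter_mono inf_le_right)
      have hsum := ω.map_add g (h - g) hg hd
      rw [add_sub_cancel] at hsum
      linarith
    have hmem1 : MemLinf μ₀ (1 : ℝ → ℝ) := memLp_top_const 1
    have hx1nn : (0:ℝ) ≤ ω.toFun F₁ :=
      ω.nonneg F₁ hmemF₁ (Filter.Eventually.of_forall hF₁nn)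
    have homega_comp : ∀ ε : ℝ, 0 < ε →
        ω.toFun (fun x : ℝ => F₁ (x ^ (1 + ε))) = ω.toFun F₁ :=
      fun ε hε => h5 (1 + ε) (by linarith) F₁ hmemF₁
    have hle_smul : ∀ (G : ℝ → ℝ), MemLinf μ₀ G → (∀ t, 0 ≤ G t) → (∀ t, G t ≤ M₂ ⊔ M₃) →
        (∀ ε : ℝ, 0 < ε → ∀ᶠ t in atTop, G t ≤ (1 + 2 * ε) * F₁ (t ^ (1 + ε))) →
        ω.toFun G ≤ ω.toFun F₁ := by
      intro G hGmem hGnn hGbd hGE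
      have key : ∀ ε : ℝ, 0 < ε → ω.toFun G ≤ (1 + 2 * ε) * ω.toFun F₁ := by
        intro ε hε
        have hcm := hcomp_mem ε hε
        have hsm : MemLinf μ₀ ((1 + 2 * ε) • (fun x : ℝ => F₁ (x ^ (1 + ε)))) :=
          hcm.const_smul _
        have hmono' : ω.toFun G ≤ ω.toFun ((1 + 2 * ε) • fun x : ℝ => F₁ (x ^ (1 + ε))) := by
          apply homega_mono G _ hGmem hsm
          · refine ⟨(1 + 2 * ε) * N, fun t => ?_⟩
            have h1 := hF₁bd (t ^ (1 + ε))
            have h2' := hGnn t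
            have h3 : ((1 + 2 * ε) • fun x : ℝ => F₁ (x ^ (1 + ε))) t
                = (1 + 2 * ε) * F₁ (t ^ (1 + ε)) := rfl
            rw [h3]
            nlinarith
          · exact (hGE ε hε).mono fun t ht => by
              have h3 : ((1 + 2 * ε) • fun x : ℝ => F₁ (x ^ (1 + ε))) t
                  = (1 + 2 * ε) * F₁ (t ^ (1 + ε)) := rfl
              rw [h3]; exact ht
        rwa [ω.map_smul _ _ hcm, homega_comp ε hε] at hmono'
      apply le_of_forall_pos_le_add
      intro η hη
      have hεpos : (0:ℝ) < η / (2 * (ω.toFun F₁ + 1)) := by positivity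
      refine le_trans (key _ hεpos) ?_
      have hx := hx1nn
      have heq : (1 + 2 * (η / (2 * (ω.toFun F₁ + 1)))) * ω.toFun F₁
          = ω.toFun F₁ + η * (ω.toFun F₁ / (ω.toFun F₁ + 1)) := by
        field_simp
      rw [heq]
      have hfr : ω.toFun F₁ / (ω.toFun F₁ + 1) ≤ 1 :=
        div_le_one_of_le₀ (by linarith) (by linarith)
      nlinarith
    -- the two ω-equalities
    have heq12 : ω.toFun F₁ = ω.toFun F₂ := by
      apply le_antisymm
      · apply le_of_forall_pos_le_add
        intro δ hδ
        have hmemδ : MemLinf μ₀ (δ • (1 : ℝ → ℝ)) := hmem1.const_smul δ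
        have hmem2' : MemLinf μ₀ (F₂ + δ • (1 : ℝ → ℝ)) := hmemF₂.add hmemδ
        have h := homega_mono F₁ (F₂ + δ • (1:ℝ→ℝ)) hmemF₁ hmem2'
          ⟨M₂ + δ, fun t => by
            have h1 := hF₂bd t
            have h0' := hF₁nn t
            simp only [Pi.add_apply, Pi.smul_apply, Pi.one_apply, smul_eq_mul, mul_one]
            linarith⟩
          ((hE1 δ hδ).mono fun t ht => by
            simp only [Pi.add_apply, Pi.smul_apply, Pi.one_apply, smul_eq_mul, mul_one]
            exact ht)
        rwa [ω.map_add F₂ _ hmemF₂ hmemδ, ω.map_smul δ 1 hmem1, ω.map_one, mul_one] at h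
      · exact hle_smul F₂ hmemF₂ hF₂nn (fun t => le_trans (hF₂bd t) le_sup_left) hE2
    have heq13 : ω.toFun F₁ = ω.toFun F₃ := by
      apply le_antisymm
      · exact homega_mono F₁ F₃ hmemF₁ hmemF₃
          ⟨M₃, fun t => by have := hF₃bd t; have := hF₁nn t; linarith⟩ hE3
      · exact hle_smul F₃ hmemF₃ hF₃nn (fun t => le_trans (hF₃bd t) le_sup_right) hE4
    -- limit statements
    have hpull : ∀ (G : ℝ → ℝ),
        (∀ ε : ℝ, 0 < ε → ∀ᶠ t in atTop, G t ≤ (1 + 2 * ε) * F₁ (t ^ (1 + ε))) →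
        ∀ B : ℝ, 0 ≤ B → Tendsto G atTop (nhds B) →
        ∀ c : ℝ, c < B → ∀ᶠ s in atTop, c < F₁ s := by
      intro G hG B hB0 hGB c hc
      obtain ⟨ε, hε, hlt⟩ : ∃ ε : ℝ, 0 < ε ∧ (1 + 2 * ε) * c < B := by
        by_cases hc0 : c ≤ 0
        · exact ⟨1, one_pos, by nlinarith⟩
        · push_neg at hc0
          refine ⟨(B - c) / (4 * c), div_pos (by linarith) (by linarith), ?_⟩
          have heq' : (1 + 2 * ((B - c) / (4 * c))) * c = c + (B - c) / 2 := by
            field_simp; ring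
          rw [heq']; linarith
      have hev : ∀ᶠ t in atTop, c < F₁ (t ^ (1 + ε)) := by
        filter_upwards [hG ε hε, hGB.eventually (eventually_gt_nhds hlt)] with t h1' h2'
        have h3 : (1 + 2 * ε) * c < (1 + 2 * ε) * F₁ (t ^ (1 + ε)) := lt_of_lt_of_le h2' h1'
        exact (mul_lt_mul_iff_right₀ (by linarith)).1 h3
      have hcomp : Tendsto (fun s : ℝ => s ^ (1 + ε)⁻¹) atTop atTop :=
        tendsto_rpow_atTop (by positivity)
      filter_upwards [hcomp.eventually hev, eventually_gt_atTop (0:ℝ)] with s h1' hs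
      have hss : (s ^ (1 + ε)⁻¹) ^ (1 + ε) = s := by
        rw [← Real.rpow_mul hs.le, inv_mul_cancel₀ (by positivity : (1:ℝ) + ε ≠ 0),
          Real.rpow_one]
      rw [← hss]
      exact h1'
    have hupp : ∀ (G : ℝ → ℝ),
        (∀ ε : ℝ, 0 < ε → ∀ᶠ t in atTop, G t ≤ (1 + 2 * ε) * F₁ (t ^ (1 + ε))) →
        ∀ B : ℝ, 0 ≤ B → Tendsto F₁ atTop (nhds B) →
        ∀ c : ℝ, B < c → ∀ᶠ t in atTop, G t < c := by
      intro G hG B hB0 hF1B c hc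
      set ε : ℝ := min 1 ((c - B) / (2 * (2 * B + 3))) with hεdef
      have hεpos : 0 < ε := lt_min one_pos (div_pos (by linarith) (by linarith))
      have hε1 : ε ≤ 1 := min_le_left _ _
      have hε2 : ε ≤ (c - B) / (2 * (2 * B + 3)) := min_le_right _ _
      have h2B3 : (0:ℝ) < 2 * B + 3 := by linarith
      have hb2 : ε * (2 * B + 3) ≤ (c - B) / 2 := by
        have hmul := mul_le_mul_of_nonneg_right hε2 h2B3.le
        have heq' : ((c - B) / (2 * (2 * B + 3))) * (2 * B + 3) = (c - B) / 2 := by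
          field_simp
        rw [heq'] at hmul
        exact hmul
      have hsq : ε * ε ≤ ε := mul_le_of_le_one_right hεpos.le hε1
      have hkeyc : (1 + 2 * ε) * (B + ε) < c := by nlinarith
      have hcompT : Tendsto (fun t : ℝ => F₁ (t ^ (1 + ε))) atTop (nhds B) :=
        hF1B.comp (tendsto_rpow_atTop (by linarith))
      filter_upwards [hG ε hεpos,
        hcompT.eventually (eventually_lt_nhds (show B < B + ε by linarith))] with t h1' h2'
      calc G t ≤ (1 + 2 * ε) * F₁ (t ^ (1 + ε)) := h1'
      _ < (1 + 2 * ε) * (B + ε) := by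
          exact mul_lt_mul_of_pos_left h2' (by linarith)
      _ < c := hkeyc
    -- implications between limits
    have himpl1 : ∀ B : ℝ, Tendsto F₁ atTop (nhds B) →
        Tendsto F₂ atTop (nhds B) ∧ Tendsto F₃ atTop (nhds B) := by
      intro B h
      have hB0 : (0:ℝ) ≤ B := ge_of_tendsto' h hF₁nn
      constructor
      · rw [tendsto_order]
        constructor
        · intro c hc
          have hδ : (0:ℝ) < (B - c) / 2 := by linarith
          filter_upwards [hE1 _ hδ,
            h.eventually (eventually_gt_nhds (show (B + c) / 2 < B by linarith))]
            with t h1' h2'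
          linarith
        · intro c hc
          exact hupp F₂ hE2 B hB0 h c hc
      · rw [tendsto_order]
        constructor
        · intro c hc
          filter_upwards [hE3, h.eventually (eventually_gt_nhds hc)] with t h1' h2'
          linarith
        · intro c hc
          exact hupp F₃ hE4 B hB0 h c hc
    have himpl21 : ∀ B : ℝ, Tendsto F₂ atTop (nhds B) → Tendsto F₁ atTop (nhds B) := by
      intro B h
      have hB0 : (0:ℝ) ≤ B := ge_of_tendsto' h hF₂nn
      rw [tendsto_order]
      constructor
      · intro c hc
        exact hpull F₂ hE2 B hB0 h c hc
      · intro c hc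
        have hδ : (0:ℝ) < (c - B) / 2 := by linarith
        filter_upwards [hE1 _ hδ,
          h.eventually (eventually_lt_nhds (show B < (B + c) / 2 by linarith))]
          with t h1' h2'
        linarith
    have himpl31 : ∀ B : ℝ, Tendsto F₃ atTop (nhds B) → Tendsto F₁ atTop (nhds B) := by
      intro B h
      have hB0 : (0:ℝ) ≤ B := ge_of_tendsto' h hF₃nn
      rw [tendsto_order]
      constructor
      · intro c hc
        exact hpull F₃ hE4 B hB0 h c hc
      · intro c hc
        filter_upwards [hE3, h.eventually (eventually_lt_nhds hc)] with t h1' h2'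
        linarith
    refine ⟨⟨hmemF₁, hmemF₂, hmemF₃⟩, ⟨heq12, heq12 ▸ heq13⟩, ?_⟩
    rintro B (h | h | h)
    · exact ⟨h, (himpl1 B h).1, (himpl1 B h).2⟩
    · have h1' := himpl21 B h
      exact ⟨h1', h, (himpl1 B h1').2⟩
    · have h1' := himpl31 B h
      exact ⟨h1', (himpl1 B h1').1, h⟩

  · -- degenerate case : f is not integrable near 0, all integrals vanish
    have hnint : ∀ u : ℝ, 0 < u → ¬ IntegrableOn f (Set.Ioc 0 u) volume := by
      intro u hu hI
      rcases le_or_gt 1 u with h | h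
      · exact hintc (hI.mono_set (Set.Ioc_subset_Ioc_right h))
      · have h2' : IntegrableOn f (Set.Ioc u 1) volume :=
          intOn_Ioc_of_pos hf0 hmono hmeas hu 1
        have h3 := hI.union h2'
        rw [Set.Ioc_union_Ioc_eq_Ioc hu.le h.le] at h3
        exact hintc h3
    have hF₁0 : F₁ = fun _ => (0:ℝ) := by
      rw [hF₁]; funext t
      by_cases ht : 0 < t
      · rw [if_pos ht, MeasureTheory.integral_undef (hnint t ht), mul_zero]
      · rw [if_neg ht]
    have hF₂0 : F₂ = fun _ => (0:ℝ) := by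
      rw [hF₂]; funext t
      by_cases ht : 0 < t
      · rw [if_pos ht]
        by_cases hS : ({s : ℝ | 0 < s ∧ t⁻¹ < f s} : Set ℝ).Nonempty
        · obtain ⟨s₀, hs₀⟩ := hS
          have hnotint : ¬ IntegrableOn f {s : ℝ | 0 < s ∧ t⁻¹ < f s} volume := by
            intro hI
            apply hnint (s₀ / 2) (by linarith [hs₀.1])
            apply hI.mono_set
            intro x hx
            refine ⟨hx.1, lt_of_lt_of_le hs₀.2 ?_⟩
            exact hmono (Set.mem_Ioi.2 hx.1) (Set.mem_Ioi.2 hs₀.1)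
              (le_trans hx.2 (by linarith [hs₀.1]))
          rw [MeasureTheory.integral_undef hnotint, mul_zero]
        · rw [Set.not_nonempty_iff_eq_empty] at hS
          rw [hS]
          simp
      · rw [if_neg ht]
    have hF₃0 : F₃ = fun _ => (0:ℝ) := by
      rw [hF₃]; funext t
      by_cases ht : 0 < t
      · rw [if_pos ht]
        rcases le_or_gt (C * t * Real.log t) 0 with h | h
        · rw [max_eq_right h]
          simp
        · rw [MeasureTheory.integral_undef (hnint _ (lt_max_of_lt_left h)), mul_zero]
      · rw [if_neg ht]
    have hmem0 : MemLinf μ₀ (fun _ : ℝ => (0:ℝ)) := memLp_top_const 0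
    have hω0 : ω.toFun (fun _ : ℝ => (0:ℝ)) = 0 := by
      have hsmul : (0:ℝ) • (fun _ : ℝ => (0:ℝ)) = (fun _ : ℝ => (0:ℝ)) := by
        funext x; simp
      have := ω.map_smul 0 (fun _ : ℝ => (0:ℝ)) hmem0
      rw [hsmul, zero_mul] at this
      exact this
    refine ⟨⟨by rw [hF₁0]; exact hmem0, by rw [hF₂0]; exact hmem0, by rw [hF₃0]; exact hmem0⟩,
      ⟨by rw [hF₁0, hF₂0], by rw [hF₂0, hF₃0]⟩, ?_⟩
    have hT : Tendsto (fun _ : ℝ => (0:ℝ)) atTop (nhds 0) := tendsto_const_nhds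
    rintro B (h | h | h)
    all_goals {
      have hB : B = 0 := by
        first
        | (rw [hF₁0] at h; exact (tendsto_nhds_unique h hT))
        | (rw [hF₂0] at h; exact (tendsto_nhds_unique h hT))
        | (rw [hF₃0] at h; exact (tendsto_nhds_unique h hT))
      subst hB
      exact ⟨by rw [hF₁0]; exact hT, by rw [hF₂0]; exact hT, by rw [hF₃0]; exact hT⟩
    }
end
end

section
/- (Lemma 3.3(ii).) Let H be a complex Hilbert space and let T and b be bounded linear operators on H with T ≥ 0, and suppose b ≥ m·1 for some m > 0 (where 1 is the identity operator). Then for every s with 1 ≤ s < 2, (b^{1/2} T b^{1/2})^s ≥ m^{s−1}·(b^{1/2} T^s b^{1/2}), where the powers of positive operators are defined by the continuous functional calculus and ≤ denotes the order on self-adjoint operators (A ≤ B iff B − A is positive). -/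
open scoped NNReal ENNReal
open Filter

noncomputable section

set_option synthInstance.maxHeartbeats 1000000
set_option maxHeartbeats 1000000
set_option linter.unusedSectionVars false

namespace SqrtMulSqrtRpowAux

variable {A : Type*} [CStarAlgebra A] [PartialOrder A] [StarOrderedRing A]

private lemma pow_mul_comm_aux (x : A) (n : ℕ) :
    (x * star x) ^ n * x = x * (star x * x) ^ n := by
  induction n with
  | zero => simp
  | succ n ih =>
    calc (x * star x) ^ (n+1) * x = (x * star x) ^ n * x * (star x * x) := by
          rw [pow_succ]; noncomm_ring
      _ = x * (star x * x) ^ (n+1) := by rw [ih, pow_succ]; noncomm_ring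

private lemma aeval_mul_comm (x : A) (q : Polynomial ℝ) :
    Polynomial.aeval (x * star x) q * x = x * Polynomial.aeval (star x * x) q := by
  induction q using Polynomial.induction_on' with
  | add p q hp hq => simp [map_add, add_mul, mul_add, hp, hq]
  | monomial n c =>
    simp only [Polynomial.aeval_monomial, mul_assoc, pow_mul_comm_aux]
    rw [Algebra.commutes, mul_assoc]
    congr 1
    exact (Algebra.commutes _ _).symm

/-- Commutation of the real continuous functional calculus:
`f(x x*) x = x f(x* x)`. -/
lemma cfc_real_mul_comm (x : A) (f : ℝ → ℝ) (hf : Continuous f) :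
    cfc f (x * star x) * x = x * cfc f (star x * x) := by
  rcases subsingleton_or_nontrivial A with h | h
  · exact Subsingleton.elim _ _
  have ha : IsSelfAdjoint (x * star x) := IsSelfAdjoint.mul_star_self x
  have hb : IsSelfAdjoint (star x * x) := IsSelfAdjoint.star_mul_self x
  set M : ℝ := max ‖x * star x‖ ‖star x * x‖ with hM
  have hspec : ∀ {c : A}, IsSelfAdjoint c → ‖c‖ ≤ M →
      spectrum ℝ c ⊆ Set.Icc (-M) M := by
    intro c hc hcM y hy
    have h1 : ‖y‖ ≤ ‖c‖ := spectrum.norm_le_norm_of_mem hy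
    rw [Real.norm_eq_abs, abs_le] at h1
    constructor <;> [linarith [h1.1]; linarith [h1.2]]
  rw [← sub_eq_zero, ← norm_le_zero_iff]
  refine le_of_forall_pos_le_add fun ε hε => ?_
  obtain ⟨p, hp⟩ := exists_polynomial_near_of_continuousOn (-M) M f
    hf.continuousOn (ε / (2 * (‖x‖ + 1))) (by positivity)
  have key : ∀ {c : A}, IsSelfAdjoint c → ‖c‖ ≤ M →
      ‖cfc f c - cfc (fun y => p.eval y) c‖ ≤ ε / (2 * (‖x‖ + 1)) := by
    intro c hc hcM
    rw [← cfc_sub _ _ c]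
    refine norm_cfc_le (by positivity) fun y hy => ?_
    have := hp y (hspec hc hcM hy)
    rw [Real.norm_eq_abs, abs_sub_comm]
    exact this.le
  have hmid : cfc (fun y => p.eval y) (x * star x) * x
      = x * cfc (fun y => p.eval y) (star x * x) := by
    rw [cfc_polynomial p (x * star x), cfc_polynomial p (star x * x), aeval_mul_comm]
  calc ‖cfc f (x * star x) * x - x * cfc f (star x * x)‖
      = ‖(cfc f (x * star x) - cfc (fun y => p.eval y) (x * star x)) * x
          + x * (cfc (fun y => p.eval y) (star x * x) - cfc f (star x * x))‖ := by
        rw [sub_mul, mul_sub, hmid]; abel_nf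
    _ ≤ ‖(cfc f (x * star x) - cfc (fun y => p.eval y) (x * star x)) * x‖
          + ‖x * (cfc (fun y => p.eval y) (star x * x) - cfc f (star x * x))‖ :=
        norm_add_le _ _
    _ ≤ ε / (2 * (‖x‖ + 1)) * ‖x‖ + ‖x‖ * (ε / (2 * (‖x‖ + 1))) := by
        refine add_le_add ?_ ?_
        · exact (norm_mul_le _ _).trans (by
            refine mul_le_mul_of_nonneg_right (key ha (le_max_left _ _)) (norm_nonneg _))
        · refine (norm_mul_le _ _).trans ?_
          refine mul_le_mul_of_nonneg_left ?_ (norm_nonneg _)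
          rw [norm_sub_rev]
          exact key hb (le_max_right _ _)
    _ ≤ 0 + ε := by
        have hx1 : (0:ℝ) < ‖x‖ + 1 := by positivity
        rw [zero_add]
        have : ε / (2 * (‖x‖ + 1)) * ‖x‖ ≤ ε / 2 := by
          rw [div_mul_eq_mul_div, div_le_div_iff₀ (by positivity) (by norm_num)]
          nlinarith [norm_nonneg x, hε.le]
        nlinarith [this]

lemma cfc_nnreal_mul_comm (x : A) (g : ℝ≥0 → ℝ≥0) (hg : Continuous g) :
    cfc g (x * star x) * x = x * cfc g (star x * x) := by
  have ha : (0:A) ≤ x * star x := mul_star_self_nonneg x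
  have hb : (0:A) ≤ star x * x := star_mul_self_nonneg x
  rw [cfc_nnreal_eq_real g _ ha, cfc_nnreal_eq_real g _ hb]
  exact cfc_real_mul_comm x _ (NNReal.continuous_coe.comp (hg.comp continuous_real_toNNReal))

lemma rpow_add_of_nonneg (a : A) {x y : ℝ} (hx : 0 ≤ x) (hy : 0 ≤ y) (ha : 0 ≤ a) :
    a ^ (x + y) = a ^ x * a ^ y := by
  simp only [← CFC.rpow_eq_pow, CFC.rpow]
  rw [← cfc_mul _ _ a]
  refine cfc_congr fun z _ => ?_
  rcases eq_or_ne z 0 with rfl | hz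
  · rcases eq_or_lt_of_le hx with rfl | hx'
    · simp
    · rcases eq_or_lt_of_le hy with rfl | hy'
      · simp
      · rw [NNReal.zero_rpow (by positivity), NNReal.zero_rpow hx'.ne',
          NNReal.zero_rpow hy'.ne', mul_zero]
  · exact NNReal.rpow_add hz x y

lemma rpow_rpow_of_unit (a : A) (ha : 0 ≤ a) (h0 : (0:ℝ≥0) ∉ spectrum ℝ≥0 a) (x y : ℝ) :
    (a ^ x) ^ y = a ^ (x * y) := by
  rcases eq_or_ne x 0 with rfl | hx
  · rw [CFC.rpow_zero a ha, zero_mul, CFC.rpow_zero a ha, CFC.one_rpow]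
  · exact CFC.rpow_rpow a x y hx (((spectrum.zero_notMem_iff ℝ≥0).mp h0).isStrictlyPositive ha)

lemma sqrt_rpow_half (a : A) {t : ℝ} (ht : 0 ≤ t) : CFC.sqrt (a ^ t) = a ^ (t / 2) := by
  have := CFC.sqrt_rpow_nnreal (a := a) (x := t.toNNReal)
  rwa [Real.coe_toNNReal _ ht] at this

lemma spectralRadius_mul_comm (y z : A) :
    spectralRadius ℂ (y * z) = spectralRadius ℂ (z * y) := by
  have key : ∀ u v : A, spectralRadius ℂ (u * v) ≤ spectralRadius ℂ (v * u) := by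
    intro u v
    rw [spectralRadius, spectralRadius]
    refine iSup₂_le fun k hk => ?_
    rcases eq_or_ne k 0 with rfl | hk0
    · simp
    · have hmem : k ∈ spectrum ℂ (v * u) := by
        have h := spectrum.nonzero_mul_comm (𝕜 := ℂ) u v
        have hx : k ∈ spectrum ℂ (u * v) \ {0} := ⟨hk, hk0⟩
        rw [h] at hx
        exact hx.1
      exact le_iSup₂ (f := fun (k : ℂ) (_ : k ∈ spectrum ℂ (v * u)) => (‖k‖₊ : ℝ≥0∞)) k hmem
  exact le_antisymm (key y z) (key z y)

lemma midpoint_step [Nontrivial A] {a b : A} (ha : 0 ≤ a) (hb : 0 ≤ b) (hbu : IsUnit b)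
    {p q : ℝ} (hp : 0 ≤ p) (hq : 0 ≤ q) (h1 : a ^ p ≤ b ^ p) (h2 : a ^ q ≤ b ^ q) :
    a ^ ((p + q) / 2) ≤ b ^ ((p + q) / 2) := by
  have h0 : (0:ℝ≥0) ∉ spectrum ℝ≥0 b := spectrum.zero_notMem ℝ≥0 hbu
  have hbt : ∀ t : ℝ, IsUnit (b ^ t) := fun t => isUnit_iff_exists.mpr
    ⟨b ^ (-t), CFC.rpow_mul_rpow_neg t (hbu.isStrictlyPositive hb), CFC.rpow_neg_mul_rpow t (hbu.isStrictlyPositive hb)⟩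
  -- `key`: from `a ^ t ≤ b ^ t`, a norm bound
  have key : ∀ t : ℝ, 0 ≤ t → a ^ t ≤ b ^ t → ‖a ^ (t/2) * b ^ (-(t/2))‖ ≤ 1 := by
    intro t ht hab
    have := (le_iff_norm_sqrt_mul_rpow _ _ CFC.rpow_nonneg
      ((hbt t).isStrictlyPositive CFC.rpow_nonneg)).mp hab
    rwa [sqrt_rpow_half a ht, rpow_rpow_of_unit b hb h0 t (-(1/2)),
      show t * (-(1/2) : ℝ) = -(t/2) by ring] at this
  have k1 : ‖a ^ (p/2) * b ^ (-(p/2))‖ ≤ 1 := key p hp h1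
  have k2 : ‖a ^ (q/2) * b ^ (-(q/2))‖ ≤ 1 := key q hq h2
  have k1' : ‖b ^ (-(p/2)) * a ^ (p/2)‖ ≤ 1 := by
    rw [show b ^ (-(p/2)) * a ^ (p/2)
        = star (a ^ (p/2) * b ^ (-(p/2))) by
      rw [star_mul, (IsSelfAdjoint.of_nonneg CFC.rpow_nonneg).star_eq,
        (IsSelfAdjoint.of_nonneg CFC.rpow_nonneg).star_eq]]
    rwa [norm_star]
  set u : ℝ := (p + q) / 2 with hu
  have hu0 : 0 ≤ u := by positivity
  -- the target norm estimate
  have hDnorm : ‖a ^ (u/2) * b ^ (-(u/2))‖ ≤ 1 := by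
    rw [← sq_le_one_iff₀ (norm_nonneg _), sq, ← CStarRing.norm_star_mul_self]
    have hstar : star (a ^ (u/2) * b ^ (-(u/2))) = b ^ (-(u/2)) * a ^ (u/2) := by
      rw [star_mul, (IsSelfAdjoint.of_nonneg CFC.rpow_nonneg).star_eq,
        (IsSelfAdjoint.of_nonneg CFC.rpow_nonneg).star_eq]
    rw [hstar]
    -- E := b^{-u/2} a^u b^{-u/2}
    have hE : b ^ (-(u/2)) * a ^ (u/2) * (a ^ (u/2) * b ^ (-(u/2)))
        = b ^ (-(u/2)) * a ^ u * b ^ (-(u/2)) := by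
      have h2' := rpow_add_of_nonneg a (show (0:ℝ) ≤ u/2 by positivity)
        (show (0:ℝ) ≤ u/2 by positivity) ha
      rw [show u/2 + u/2 = u from by ring] at h2'
      rw [h2']; noncomm_ring
    rw [hE]
    have hEsa : IsSelfAdjoint (b ^ (-(u/2)) * a ^ u * b ^ (-(u/2))) :=
      IsSelfAdjoint.of_nonneg (conjugate_nonneg_of_nonneg CFC.rpow_nonneg CFC.rpow_nonneg)
    -- pass to the spectral radius and use cyclicity
    have hsr : (‖b ^ (-(u/2)) * a ^ u * b ^ (-(u/2))‖₊ : ℝ≥0∞) ≤ 1 := by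
      rw [← hEsa.spectralRadius_eq_nnnorm]
      calc spectralRadius ℂ (b ^ (-(u/2)) * a ^ u * b ^ (-(u/2)))
          = spectralRadius ℂ (a ^ u * b ^ (-(u/2)) * b ^ (-(u/2))) := by
            rw [mul_assoc, spectralRadius_mul_comm]
        _ = spectralRadius ℂ (a ^ (q/2) * (a ^ (p/2) * b ^ (-(p/2)) * (b ^ (-(q/2))))) := by
            congr 1
            rw [mul_assoc, ← CFC.rpow_add hbu, show -(u/2) + -(u/2) = -(p/2) + -(q/2) by
              rw [hu]; ring, CFC.rpow_add hbu,
              show u = q/2 + p/2 by rw [hu]; ring,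
              rpow_add_of_nonneg a (by positivity) (by positivity) ha]
            noncomm_ring
        _ = spectralRadius ℂ (a ^ (p/2) * b ^ (-(p/2)) * (b ^ (-(q/2)) * a ^ (q/2))) := by
            rw [spectralRadius_mul_comm]; congr 1; noncomm_ring
        _ ≤ ‖a ^ (p/2) * b ^ (-(p/2)) * (b ^ (-(q/2)) * a ^ (q/2))‖₊ :=
            spectrum.spectralRadius_le_nnnorm _
        _ ≤ 1 := by
            rw [← ENNReal.coe_one, ENNReal.coe_le_coe]
            calc ‖a ^ (p/2) * b ^ (-(p/2)) * (b ^ (-(q/2)) * a ^ (q/2))‖₊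
                ≤ ‖a ^ (p/2) * b ^ (-(p/2))‖₊ * ‖b ^ (-(q/2)) * a ^ (q/2)‖₊ := nnnorm_mul_le _ _
              _ ≤ 1 * 1 := by
                  gcongr
                  · exact k1
                  · -- same trick with star for the q-term
                    have : ‖b ^ (-(q/2)) * a ^ (q/2)‖ ≤ 1 := by
                      rw [show b ^ (-(q/2)) * a ^ (q/2)
                          = star (a ^ (q/2) * b ^ (-(q/2))) by
                        rw [star_mul, (IsSelfAdjoint.of_nonneg CFC.rpow_nonneg).star_eq,
                          (IsSelfAdjoint.of_nonneg CFC.rpow_nonneg).star_eq]]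
                      rwa [norm_star]
                    exact this
              _ = 1 := one_mul 1
    rw [← ENNReal.coe_one, ENNReal.coe_le_coe] at hsr
    exact_mod_cast hsr
  -- conclude
  refine (le_iff_norm_sqrt_mul_rpow _ _ CFC.rpow_nonneg ((hbt u).isStrictlyPositive CFC.rpow_nonneg)).mpr ?_
  rwa [sqrt_rpow_half a hu0, rpow_rpow_of_unit b hb h0 u (-(1/2)),
    show u * (-(1/2) : ℝ) = -(u/2) by ring]

lemma LH_dyadic [Nontrivial A] :
    ∀ n k : ℕ, k ≤ 2 ^ n → ∀ {a b : A}, 0 ≤ a → 0 ≤ b → IsUnit b → a ≤ b →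
      a ^ ((k : ℝ) / 2 ^ n) ≤ b ^ ((k : ℝ) / 2 ^ n) := by
  intro n
  induction n with
  | zero =>
    intro k hk a b ha hb hbu hab
    interval_cases k
    · simp only [Nat.cast_zero, zero_div, pow_zero]
      rw [CFC.rpow_zero a ha, CFC.rpow_zero b hb]
    · simp only [Nat.cast_one, pow_zero, div_one]
      rwa [CFC.rpow_one a ha, CFC.rpow_one b hb]
  | succ n ih =>
    intro k hk a b ha hb hbu hab
    set j : ℕ := min k (2 ^ n) with hj
    set l : ℕ := k - j with hl
    have hjn : j ≤ 2 ^ n := min_le_right _ _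
    have hln : l ≤ 2 ^ n := by
      rw [hl, hj]
      omega
    have hjl : j + l = k := by
      rw [hl]
      have : j ≤ k := min_le_left _ _
      omega
    have key := midpoint_step (p := (j : ℝ) / 2 ^ n) (q := (l : ℝ) / 2 ^ n) ha hb hbu
      (by positivity) (by positivity) (ih j hjn ha hb hbu hab) (ih l hln ha hb hbu hab)
    have harith : ((j : ℝ) / 2 ^ n + (l : ℝ) / 2 ^ n) / 2 = (k : ℝ) / 2 ^ (n + 1) := by
      rw [← hjl]
      push_cast
      rw [pow_succ]
      ring
    rwa [harith] at key

lemma tendsto_rpow_of_tendsto [Nontrivial A] (a : A) (ha : 0 ≤ a) {r : ℝ} (hr : 0 < r)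
    {u : ℕ → ℝ} (hu : Tendsto u atTop (nhds r)) :
    Tendsto (fun n => a ^ (u n)) atTop (nhds (a ^ r)) := by
  rw [Metric.tendsto_atTop]
  intro ε hε
  set M : ℝ≥0 := ‖a‖₊ + 1 with hM
  set K : Set (ℝ≥0 × ℝ) := Set.Icc 0 M ×ˢ Set.Icc (r / 2) (r + 1) with hK
  have hKc : IsCompact K := isCompact_Icc.prod isCompact_Icc
  have hcont : ContinuousOn (fun z : ℝ≥0 × ℝ => z.1 ^ z.2) K := by
    intro z hz
    exact (NNReal.continuousAt_rpow (Or.inr (lt_of_lt_of_le (by positivity) hz.2.1))).continuousWithinAt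
  have hUC := hKc.uniformContinuousOn_of_continuous hcont
  rw [Metric.uniformContinuousOn_iff] at hUC
  obtain ⟨δ, hδ, hUCδ⟩ := hUC (ε / 2) (by positivity)
  -- eventually `u n` is close to `r`
  have hev : ∀ᶠ n in atTop, |u n - r| < min δ (min (r / 2) 1) := by
    have := Metric.tendsto_atTop.mp hu (min δ (min (r / 2) 1)) (by positivity)
    obtain ⟨N, hN⟩ := this
    filter_upwards [eventually_ge_atTop N] with n hn
    simpa [Real.dist_eq] using hN n hn
  rw [eventually_atTop] at hev
  obtain ⟨N, hN⟩ := hev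
  refine ⟨N, fun n hn => ?_⟩
  have hclose := hN n hn
  have hδ' : |u n - r| < δ := lt_of_lt_of_le hclose (min_le_left _ _)
  have hr2 : |u n - r| < r / 2 :=
    lt_of_lt_of_le hclose ((min_le_right _ _).trans (min_le_left _ _))
  have h1' : |u n - r| < 1 :=
    lt_of_lt_of_le hclose ((min_le_right _ _).trans (min_le_right _ _))
  rw [abs_sub_lt_iff] at hr2 h1'
  have hun2 : u n ∈ Set.Icc (r / 2) (r + 1) :=
    ⟨by linarith [hr2.2], by linarith [h1'.1]⟩
  have hun0 : 0 ≤ u n := le_trans (by positivity) hun2.1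
  -- express the distance via cfc over ℝ
  have hrw : ∀ t : ℝ, a ^ t = cfc (fun x : ℝ => ((x.toNNReal ^ t : ℝ≥0) : ℝ)) a := by
    intro t
    rw [CFC.rpow_def, cfc_nnreal_eq_real _ _ ha]
  have hcf : ∀ t : ℝ, 0 ≤ t →
      Continuous (fun x : ℝ => ((x.toNNReal ^ t : ℝ≥0) : ℝ)) := fun t ht =>
    NNReal.continuous_coe.comp ((NNReal.continuous_rpow_const ht).comp continuous_real_toNNReal)
  rw [dist_eq_norm, hrw (u n), hrw r, ← cfc_sub _ _ a
    ((hcf (u n) hun0).continuousOn) ((hcf r hr.le).continuousOn)]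
  refine lt_of_le_of_lt (norm_cfc_le (le_of_lt (half_pos hε)) fun x hx => ?_) (half_lt_self hε)
  -- pointwise estimate via uniform continuity
  have hxM : x.toNNReal ≤ M := by
    have h1 : ‖x‖ ≤ ‖a‖ := spectrum.norm_le_norm_of_mem hx
    have h2 : x.toNNReal ≤ ‖x‖₊ := by
      rw [← NNReal.coe_le_coe, Real.coe_toNNReal', coe_nnnorm, Real.norm_eq_abs]
      exact max_le (le_abs_self x) (abs_nonneg x)
    rw [hM]
    refine h2.trans ?_
    refine le_trans ?_ (le_add_of_nonneg_right zero_le_one)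
    rwa [← NNReal.coe_le_coe, coe_nnnorm, coe_nnnorm]
  have hmem1 : ((x.toNNReal, u n) : ℝ≥0 × ℝ) ∈ K := ⟨⟨zero_le, hxM⟩, hun2⟩
  have hmem2 : ((x.toNNReal, r) : ℝ≥0 × ℝ) ∈ K :=
    ⟨⟨zero_le, hxM⟩, ⟨half_le_self hr.le, by linarith⟩⟩
  have hdist : dist ((x.toNNReal, u n) : ℝ≥0 × ℝ) (x.toNNReal, r) < δ := by
    rw [Prod.dist_eq]
    simp only [dist_self]
    rw [max_lt_iff]
    exact ⟨lt_of_le_of_lt (by simp) hδ, by rwa [Real.dist_eq]⟩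
  have := hUCδ _ hmem1 _ hmem2 hdist
  rw [NNReal.dist_eq] at this
  rw [Real.norm_eq_abs]
  exact this.le

lemma LH_unit [Nontrivial A] {a b : A} (ha : 0 ≤ a) (hb : 0 ≤ b) (hbu : IsUnit b)
    (hab : a ≤ b) {r : ℝ} (hr0 : 0 ≤ r) (hr1 : r ≤ 1) : a ^ r ≤ b ^ r := by
  rcases eq_or_lt_of_le hr0 with rfl | hr
  · rw [CFC.rpow_zero a ha, CFC.rpow_zero b hb]
  · set u : ℕ → ℝ := fun n => (⌈r * 2 ^ n⌉₊ : ℝ) / 2 ^ n with hu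
    have hdy : ∀ n, a ^ u n ≤ b ^ u n := by
      intro n
      refine LH_dyadic n ⌈r * 2 ^ n⌉₊ ?_ ha hb hbu hab
      rw [Nat.ceil_le]
      push_cast
      nlinarith [pow_pos (show (0:ℝ) < 2 by norm_num) n]
    have hbound : ∀ n, |u n - r| ≤ (1 / 2 : ℝ) ^ n := by
      intro n
      have h2n : (0:ℝ) < 2 ^ n := by positivity
      have hceil1 : r * 2 ^ n ≤ (⌈r * 2 ^ n⌉₊ : ℝ) := Nat.le_ceil _
      have hceil2 : (⌈r * 2 ^ n⌉₊ : ℝ) < r * 2 ^ n + 1 :=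
        Nat.ceil_lt_add_one (by positivity)
      rw [hu, abs_le]
      constructor
      · have : r ≤ (⌈r * 2 ^ n⌉₊ : ℝ) / 2 ^ n := by
          rw [le_div_iff₀ h2n]; linarith
        have h0 : (0:ℝ) ≤ (1/2:ℝ)^n := by positivity
        simp only
        linarith
      · simp only
        have hid : (1/2:ℝ)^n * 2^n = 1 := by
          rw [← mul_pow]; norm_num
        rw [sub_le_iff_le_add, div_le_iff₀ h2n]
        nlinarith
    have hulim : Tendsto u atTop (nhds r) := by
      have h0 : Tendsto (fun n => u n - r) atTop (nhds 0) :=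
        squeeze_zero_norm hbound (tendsto_pow_atTop_nhds_zero_of_lt_one (by norm_num) (by norm_num))
      have := h0.add_const r
      simpa using this
    have ta := tendsto_rpow_of_tendsto a ha hr hulim
    have tb := tendsto_rpow_of_tendsto b hb hr hulim
    have hmem : b ^ r - a ^ r ∈ {x : A | 0 ≤ x} := by
      refine CStarAlgebra.isClosed_nonneg.mem_of_tendsto (tb.sub ta) ?_
      exact Eventually.of_forall fun n => sub_nonneg.mpr (hdy n)
    exact sub_nonneg.mp hmem

lemma smul_one_isUnit {ε : ℝ≥0} (hε : ε ≠ 0) : IsUnit (ε • (1 : A)) := by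
  refine isUnit_iff_exists.mpr ⟨ε⁻¹ • 1, ?_, ?_⟩
  · rw [smul_mul_smul_comm, one_mul, mul_inv_cancel₀ hε, one_smul]
  · rw [smul_mul_smul_comm, one_mul, inv_mul_cancel₀ hε, one_smul]

lemma rpow_perturb_norm_le [Nontrivial A] {b : A} (hb : 0 ≤ b) (ε : ℝ≥0) {r : ℝ}
    (hr0 : 0 ≤ r) (hr1 : r ≤ 1) :
    ‖(b + ε • (1:A)) ^ r - b ^ r‖ ≤ ((ε ^ r : ℝ≥0) : ℝ) := by
  have h1 : b + ε • (1:A) = cfc (fun x : ℝ≥0 => x + ε) b := by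
    rw [cfc_add b _ _ (by fun_prop) (by fun_prop), cfc_id' ℝ≥0 b, cfc_const ε b,
      Algebra.algebraMap_eq_smul_one]
  have h2 : (b + ε • (1:A)) ^ r = cfc (fun x : ℝ≥0 => (x + ε) ^ r) b := by
    rw [h1, CFC.rpow_def, ← cfc_comp' (fun x : ℝ≥0 => x ^ r) (fun x : ℝ≥0 => x + ε) b
      ((NNReal.continuous_rpow_const hr0).continuousOn) (by fun_prop)]
  have h3 : b ^ r = cfc (fun x : ℝ≥0 => x ^ r) b := CFC.rpow_def
  have hf1 : Continuous (fun x : ℝ => (((x.toNNReal + ε) ^ r : ℝ≥0) : ℝ)) :=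
    NNReal.continuous_coe.comp (((NNReal.continuous_rpow_const hr0).comp
      (by fun_prop : Continuous fun x : ℝ≥0 => x + ε)).comp continuous_real_toNNReal)
  have hf2 : Continuous (fun x : ℝ => ((x.toNNReal ^ r : ℝ≥0) : ℝ)) :=
    NNReal.continuous_coe.comp ((NNReal.continuous_rpow_const hr0).comp
      continuous_real_toNNReal)
  rw [h2, h3, cfc_nnreal_eq_real _ _ hb, cfc_nnreal_eq_real _ _ hb,
    ← cfc_sub _ _ b hf1.continuousOn hf2.continuousOn]
  refine norm_cfc_le (by positivity) fun x hx => ?_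
  have hmono : (x.toNNReal : ℝ≥0) ^ r ≤ (x.toNNReal + ε) ^ r :=
    NNReal.rpow_le_rpow (le_add_of_nonneg_right zero_le) hr0
  have hsub : ((x.toNNReal + ε) ^ r : ℝ≥0) ≤ x.toNNReal ^ r + ε ^ r :=
    NNReal.rpow_add_le_add_rpow _ _ hr0 hr1
  have hmono' : ((x.toNNReal ^ r : ℝ≥0) : ℝ) ≤ (((x.toNNReal + ε) ^ r : ℝ≥0) : ℝ) :=
    NNReal.coe_le_coe.mpr hmono
  have hsub' := NNReal.coe_le_coe.mpr hsub
  push_cast at hsub'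
  rw [Real.norm_eq_abs, abs_of_nonneg (sub_nonneg.mpr hmono')]
  push_cast
  linarith

/-- **Löwner–Heinz**: `t ↦ t ^ r` is operator monotone for `0 ≤ r ≤ 1`. -/
lemma LH [Nontrivial A] {a b : A} (ha : 0 ≤ a) (hb : 0 ≤ b) (hab : a ≤ b)
    {r : ℝ} (hr0 : 0 ≤ r) (hr1 : r ≤ 1) : a ^ r ≤ b ^ r := by
  rcases eq_or_lt_of_le hr0 with rfl | hr
  · rw [CFC.rpow_zero a ha, CFC.rpow_zero b hb]
  set c : ℕ → A := fun n => b + ((n+1 : ℝ≥0))⁻¹ • (1:A) with hc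
  have hcn0 : ∀ n : ℕ, ((n+1 : ℝ≥0)) ≠ 0 := fun n => by positivity
  have hc0 : ∀ n, 0 ≤ c n := fun n =>
    add_nonneg hb (smul_nonneg zero_le zero_le_one)
  have hcu : ∀ n, IsUnit (c n) := by
    intro n
    refine CStarAlgebra.isUnit_of_le _ (h := (smul_one_isUnit (inv_ne_zero (hcn0 n))).isStrictlyPositive ?_) ?_
    swap
    · exact smul_nonneg zero_le zero_le_one
    · exact le_add_of_nonneg_left hb
  have hstep : ∀ n, a ^ r ≤ (c n) ^ r := by
    intro n
    refine LH_unit ha (hc0 n) (hcu n) ?_ hr0 hr1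
    exact hab.trans (le_add_of_nonneg_right (smul_nonneg zero_le zero_le_one))
  have htend : Tendsto (fun n => (c n) ^ r) atTop (nhds (b ^ r)) := by
    have hboundn : ∀ n : ℕ, ‖(c n) ^ r - b ^ r‖ ≤ ((((n+1:ℝ≥0))⁻¹ ^ r : ℝ≥0) : ℝ) :=
      fun n => rpow_perturb_norm_le hb _ hr0 hr1
    have hz : Tendsto (fun n : ℕ => ((((n+1:ℝ≥0))⁻¹ ^ r : ℝ≥0) : ℝ)) atTop (nhds 0) := by
      have h1 : ∀ n : ℕ, ((((n+1:ℝ≥0))⁻¹ ^ r : ℝ≥0) : ℝ) = ((n:ℝ)+1)⁻¹ ^ r := by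
        intro n
        rw [NNReal.coe_rpow, NNReal.coe_inv]
        norm_num
      simp only [h1]
      have h2 : Tendsto (fun n : ℕ => ((n:ℝ)+1)⁻¹) atTop (nhds 0) :=
        tendsto_one_div_add_atTop_nhds_zero_nat.congr (by intro n; rw [one_div])
      have h3 : ContinuousAt (fun x : ℝ => x ^ r) 0 :=
        Real.continuousAt_rpow_const 0 r (Or.inr hr0)
      have := h3.tendsto.comp h2
      rwa [Real.zero_rpow hr.ne'] at this
    have hzero : Tendsto (fun n => (c n) ^ r - b ^ r) atTop (nhds 0) :=
      squeeze_zero_norm hboundn hz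
    have := hzero.add_const (b ^ r)
    simpa using this
  have hmem : b ^ r - a ^ r ∈ {x : A | 0 ≤ x} := by
    have hsub : Tendsto (fun n => (c n) ^ r - a ^ r) atTop (nhds (b ^ r - a ^ r)) :=
      htend.sub_const _
    refine CStarAlgebra.isClosed_nonneg.mem_of_tendsto hsub ?_
    exact Eventually.of_forall fun n => sub_nonneg.mpr (hstep n)
  exact sub_nonneg.mp hmem

lemma nnsmul_eq_cfc (m : ℝ≥0) (a : A) (ha : 0 ≤ a) :
    m • a = cfc (fun z : ℝ≥0 => m * z) a := by
  have : (fun z : ℝ≥0 => m * z) = fun z : ℝ≥0 => m • (id z) := by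
    ext z; simp [smul_eq_mul]
  rw [this, cfc_smul m id a, cfc_id ℝ≥0 a]

lemma nnsmul_nonneg (m : ℝ≥0) (a : A) (ha : 0 ≤ a) : 0 ≤ m • a := by
  rw [nnsmul_eq_cfc m a ha]
  exact cfc_predicate _ a

lemma smul_rpow (m : ℝ≥0) (a : A) (ha : 0 ≤ a) {r : ℝ} (hr : 0 ≤ r) :
    (m • a) ^ r = m ^ r • a ^ r := by
  rw [nnsmul_eq_cfc m a ha, CFC.rpow_def,
    ← cfc_comp' (fun z : ℝ≥0 => z ^ r) (fun z : ℝ≥0 => m * z) a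
      ((NNReal.continuous_rpow_const hr).continuousOn) (by fun_prop),
    cfc_congr (g := fun z : ℝ≥0 => m ^ r • (z ^ r)) (fun z _ => by
      simp [NNReal.mul_rpow, smul_eq_mul]),
    cfc_smul (m ^ r) (fun z : ℝ≥0 => z ^ r) a ((NNReal.continuous_rpow_const hr).continuousOn),
    CFC.rpow_def]

theorem main_general [Nontrivial A] (T b : A) (hT : 0 ≤ T) (m : ℝ≥0)
    (hmb : m • (1 : A) ≤ b) (s : ℝ) (hs1 : 1 ≤ s) (hs2 : s ≤ 2) :
    (m ^ (s - 1) : ℝ≥0) • (CFC.sqrt b * T ^ s * CFC.sqrt b) ≤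
      (CFC.sqrt b * T * CFC.sqrt b) ^ s := by
  have hb : 0 ≤ b := le_trans (nnsmul_nonneg m 1 zero_le_one) hmb
  set r : ℝ := s - 1 with hrdef
  have hr0 : 0 ≤ r := by simp [hrdef]; linarith
  have hr1 : r ≤ 1 := by simp [hrdef]; linarith
  set x : A := CFC.sqrt T * CFC.sqrt b with hx
  have hsT : IsSelfAdjoint (CFC.sqrt T) := IsSelfAdjoint.of_nonneg (CFC.sqrt_nonneg _)
  have hsb : IsSelfAdjoint (CFC.sqrt b) := IsSelfAdjoint.of_nonneg (CFC.sqrt_nonneg _)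
  have hstar : star x = CFC.sqrt b * CFC.sqrt T := by
    rw [hx, star_mul, hsT.star_eq, hsb.star_eq]
  have hxx : star x * x = CFC.sqrt b * T * CFC.sqrt b := by
    rw [hstar, hx, mul_assoc, ← mul_assoc (CFC.sqrt T), CFC.sqrt_mul_sqrt_self T hT, ← mul_assoc]
  have hxx' : x * star x = CFC.sqrt T * b * CFC.sqrt T := by
    rw [hstar, hx, mul_assoc, ← mul_assoc (CFC.sqrt b), CFC.sqrt_mul_sqrt_self b hb, ← mul_assoc]
  -- m • T ≤ x * star x
  have hmT : m • T ≤ x * star x := by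
    have hconj := star_left_conjugate_le_conjugate hmb (CFC.sqrt T)
    rw [hsT.star_eq] at hconj
    calc m • T = CFC.sqrt T * (m • (1:A)) * CFC.sqrt T := by
          rw [mul_smul_comm, smul_mul_assoc, mul_one, CFC.sqrt_mul_sqrt_self T hT]
      _ ≤ CFC.sqrt T * b * CFC.sqrt T := hconj
      _ = x * star x := hxx'.symm
  have hLH : (m • T) ^ r ≤ (x * star x) ^ r :=
    LH (nnsmul_nonneg m T hT) (mul_star_self_nonneg x) hmT hr0 hr1
  rw [smul_rpow m T hT hr0] at hLH
  have hconj2 := star_left_conjugate_le_conjugate hLH x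
  -- RHS of hconj2 equals (star x * x) ^ s
  have hRHS : star x * (x * star x) ^ r * x = (star x * x) ^ s := by
    have hcomm : (star x * x) ^ r * star x = star x * (x * star x) ^ r := by
      have := cfc_nnreal_mul_comm (star x) (fun z : ℝ≥0 => z ^ r)
        (NNReal.continuous_rpow_const hr0)
      rwa [star_star] at this
    rw [← hcomm, mul_assoc, show s = r + 1 by rw [hrdef]; ring,
      rpow_add_of_nonneg _ hr0 zero_le_one (star_mul_self_nonneg x),
      CFC.rpow_one _ (star_mul_self_nonneg x)]
  -- LHS of hconj2
  have hLHS : star x * (m ^ r • T ^ r) * x = m ^ r • (CFC.sqrt b * T ^ s * CFC.sqrt b) := by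
    rw [mul_smul_comm, smul_mul_assoc]
    congr 1
    rw [hstar, hx]
    have hTmid : CFC.sqrt T * T ^ r * CFC.sqrt T = T ^ s := by
      rw [CFC.sqrt_eq_rpow]
      have h1 : (T : A) ^ ((1:ℝ)/2) * T ^ r = T ^ ((1:ℝ)/2 + r) :=
        (rpow_add_of_nonneg T (by norm_num) hr0 hT).symm
      have h2 : (T : A) ^ ((1:ℝ)/2 + r) * T ^ ((1:ℝ)/2) = T ^ ((1:ℝ)/2 + r + (1:ℝ)/2) :=
        (rpow_add_of_nonneg T (by linarith) (by norm_num) hT).symm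
      rw [show (1/2 : ℝ) = ((1:ℝ)/2) from by norm_num, h1, h2,
        show (1:ℝ)/2 + r + (1:ℝ)/2 = s by rw [hrdef]; ring]
    calc CFC.sqrt b * CFC.sqrt T * (T ^ r) * (CFC.sqrt T * CFC.sqrt b)
        = CFC.sqrt b * (CFC.sqrt T * T ^ r * CFC.sqrt T) * CFC.sqrt b := by
          noncomm_ring
      _ = CFC.sqrt b * T ^ s * CFC.sqrt b := by rw [hTmid]
  calc (m ^ r : ℝ≥0) • (CFC.sqrt b * T ^ s * CFC.sqrt b)
      = star x * (m ^ r • T ^ r) * x := hLHS.symm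
    _ ≤ star x * (x * star x) ^ r * x := hconj2
    _ = (star x * x) ^ s := hRHS
    _ = (CFC.sqrt b * T * CFC.sqrt b) ^ s := by rw [hxx]


end SqrtMulSqrtRpowAux

open SqrtMulSqrtRpowAux in
/-- **Lemma 3.3(ii).**  Let `T ≥ 0` and `b ≥ m·1 > 0` be bounded operators on a complex
Hilbert space.  Then for `1 ≤ s < 2`, `(b^{1/2} T b^{1/2})^s ≥ m^{s-1} (b^{1/2} T^s b^{1/2})`
in the Loewner order, the powers being given by the continuous functional calculus. -/
theorem sqrt_mul_sqrt_rpow_ge {H : Type*} [NormedAddCommGroup H] [InnerProductSpace ℂ H]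
    [CompleteSpace H] (T b : H →L[ℂ] H) (hT : 0 ≤ T)
    (m : ℝ) (hm : 0 < m) (hmb : m • (1 : H →L[ℂ] H) ≤ b)
    (s : ℝ) (hs1 : 1 ≤ s) (hs2 : s < 2) :
    m ^ (s - 1) • (CFC.sqrt b * CFC.rpow T s * CFC.sqrt b) ≤
      CFC.rpow (CFC.sqrt b * T * CFC.sqrt b) s := by
  rcases subsingleton_or_nontrivial (H →L[ℂ] H) with hsub | hnt
  · exact le_of_eq (Subsingleton.elim _ _)
  have hsmul : ∀ (c : ℝ≥0) (z : H →L[ℂ] H), c • z = (c : ℝ) • z := fun c z => rfl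
  have h1 : m • (1 : H →L[ℂ] H) = (m.toNNReal : ℝ≥0) • (1 : H →L[ℂ] H) := by
    rw [hsmul, Real.coe_toNNReal m hm.le]
  have key := main_general T b hT m.toNNReal (h1 ▸ hmb) s hs1 hs2.le
  have h2 : ((m.toNNReal ^ (s-1) : ℝ≥0) : ℝ) = m ^ (s - 1) := by
    rw [NNReal.coe_rpow, Real.coe_toNNReal m hm.le]
  rw [hsmul, h2] at key
  exact key
end
end
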